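/- arXiv:math/0407278 — 6 statements merged into one kernel-verified Lean document; each statement's English description precedes it below -/
import Mathlib

section
/- Let X be a nonnegative random variable on a probability space such that E[exp(−a·X²)] = exp(−√a) for every a > 0. Then for every ε > 0, P(X ≤ ε) ≤ exp(−1/(4ε²)). -/
open MeasureTheory

/-! Markov's inequality applied to `exp (-a X²)`, which is at least `exp (-a ε²)` on `{X ≤ ε}`,
gives `P(X ≤ ε) ≤ exp (a ε² - √a)`; the choice `√a = 1 / (2ε²)` minimises the exponent. -/

theorem measureReal_le_exp_mul_integral_exp_neg_mul_sq {Ω : Type*} [MeasurableSpace Ω]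
    {μ : Measure Ω} [IsFiniteMeasure μ] {X : Ω → ℝ} (hX0 : ∀ ω, 0 ≤ X ω) {a : ℝ} (ha : 0 ≤ a)
    (hint : Integrable (fun ω => Real.exp (-(a * X ω ^ 2))) μ) (ε : ℝ) :
    μ.real {ω | X ω ≤ ε} ≤
      Real.exp (a * ε ^ 2) * ∫ ω, Real.exp (-(a * X ω ^ 2)) ∂μ := by
  have hsub : {ω | X ω ≤ ε} ⊆ {ω | Real.exp (-(a * ε ^ 2)) ≤ Real.exp (-(a * X ω ^ 2))} := by
    intro ω (hω : X ω ≤ ε)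
    have : X ω ^ 2 ≤ ε ^ 2 := pow_le_pow_left₀ (hX0 ω) hω 2
    simp only [Set.mem_ofPred_eq, Real.exp_le_exp, neg_le_neg_iff]
    exact mul_le_mul_of_nonneg_left this ha
  calc μ.real {ω | X ω ≤ ε}
      ≤ μ.real {ω | Real.exp (-(a * ε ^ 2)) ≤ Real.exp (-(a * X ω ^ 2))} := measureReal_mono hsub
    _ = Real.exp (a * ε ^ 2) * (Real.exp (-(a * ε ^ 2)) *
          μ.real {ω | Real.exp (-(a * ε ^ 2)) ≤ Real.exp (-(a * X ω ^ 2))}) := by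
        rw [← mul_assoc, ← Real.exp_add, add_neg_cancel, Real.exp_zero, one_mul]
    _ ≤ Real.exp (a * ε ^ 2) * ∫ ω, Real.exp (-(a * X ω ^ 2)) ∂μ := by
        gcongr
        exact mul_meas_ge_le_integral_of_nonneg
          (Filter.Eventually.of_forall fun ω => (Real.exp_pos _).le) hint _

theorem stmt_3_general (Ω : Type) [MeasurableSpace Ω] (P : Measure Ω) [IsProbabilityMeasure P]
    (X : Ω → ℝ) (hX0 : ∀ ω, 0 ≤ X ω)
    (hlap : ∀ a : ℝ, 0 < a →
      ∫ ω, Real.exp (-(a * (X ω) ^ 2)) ∂P = Real.exp (-Real.sqrt a))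
    (ε : ℝ) (hε : 0 < ε) :
    P {ω | X ω ≤ ε} ≤ ENNReal.ofReal (Real.exp (-(1 / (4 * ε ^ 2)))) := by
  set b : ℝ := 1 / (2 * ε ^ 2) with hb_def
  have hb : 0 < b := by positivity
  have hlap_b := hlap (b ^ 2) (by positivity)
  rw [Real.sqrt_sq hb.le] at hlap_b
  have hint : Integrable (fun ω => Real.exp (-(b ^ 2 * X ω ^ 2))) P :=
    .of_integral_ne_zero (hlap_b ▸ (Real.exp_pos _).ne')
  have hbound := measureReal_le_exp_mul_integral_exp_neg_mul_sq hX0 (sq_nonneg b) hint ε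
  have hexp : Real.exp (b ^ 2 * ε ^ 2) * Real.exp (-b) = Real.exp (-(1 / (4 * ε ^ 2))) := by
    rw [← Real.exp_add]
    congr 1
    rw [hb_def]
    field_simp
    ring
  rw [hlap_b, hexp] at hbound
  rw [← ofReal_measureReal]
  exact ENNReal.ofReal_le_ofReal hbound

/-- If `X` is a nonnegative random variable on a probability space with
`E[exp (-a X²)] = exp (-√a)` for every `a > 0`, then `P(X ≤ ε) ≤ exp (-1/(4ε²))` for
every `ε > 0`. -/
theorem stmt_3 (Ω : Type) [MeasurableSpace Ω] (P : Measure Ω) [IsProbabilityMeasure P]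
    (X : Ω → ℝ) (hXm : Measurable X) (hX0 : ∀ ω, 0 ≤ X ω)
    (hlap : ∀ a : ℝ, 0 < a →
      ∫ ω, Real.exp (-(a * (X ω) ^ 2)) ∂P = Real.exp (-Real.sqrt a))
    (ε : ℝ) (hε : 0 < ε) :
    P {ω | X ω ≤ ε} ≤ ENNReal.ofReal (Real.exp (-(1 / (4 * ε ^ 2)))) :=
  stmt_3_general Ω P X hX0 hlap ε hε
end

section
/- Fix 1 ≤ p ≤ ∞ and k ∈ ℕ. In ℝ^{2^k} with the ℓ_p norm, let e₁, …, e_{2^k} be the standard basis vectors and let w₁, …, w_{2^k} be the rows of the 2^k × 2^k Walsh matrix, and set A = {0} ∪ {wᵢ} ∪ {eᵢ}, a set of n = 2·2^k + 1 points. Then for every Hilbert space H, every L ≥ 1, and every linear map T : ℝ^{2^k} → H satisfying ‖u − v‖_p ≤ ‖T(u) − T(v)‖ ≤ L·‖u − v‖_p for all u, v ∈ A, one has L ≥ 2^{k·|1/p − 1/2|} = ((n−1)/2)^{|1/p − 1/2|}. -/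
/-!
The Walsh matrix is `2^(k/2)` times an orthogonal matrix, so for any vectors `x_v` in a Hilbert
space the Walsh transform `y_u = ∑ᵥ W(u,v) x_v` satisfies `∑ ‖y_u‖² = 2^k ∑ ‖x_v‖²`. Apply this to
`x_v = T e_v`, for which `y_u = T w_u` by linearity. In `ℓ_p` one has `‖e_v‖ = 1` but
`‖w_u‖ = 2^(k/p)`, so bounding both sums termwise with the two-sided bounds gives
`2^(2k/p) ≤ 2^k L²` and `2^k ≤ L² 2^(2k/p)`, that is `L ≥ 2^(k(1/p - 1/2))` and
`L ≥ 2^(k(1/2 - 1/p))`.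
-/

open scoped ENNReal

/-- The `2^k × 2^k` Walsh matrix, with rows and columns indexed by `Fin k → Bool`
(i.e. `𝔽₂^k`): its `(u, v)` entry is `(-1)^⟨u,v⟩` where `⟨u,v⟩ = #{i : uᵢ = vᵢ = 1}`.
This is the `k`-fold Kronecker power of `[[1,1],[1,-1]]`. -/
noncomputable def walshRow (k : ℕ) (u : Fin k → Bool) : (Fin k → Bool) → ℝ :=
  fun v => (-1 : ℝ) ^ (Finset.univ.filter fun i => u i && v i).card

/-- The point set `A = {0} ∪ {wᵢ} ∪ {eᵢ} ⊆ ℝ^{2^k}` consisting of the origin, the rows of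
the Walsh matrix, and the standard basis vectors, viewed inside `ℓ_p^{2^k}`. -/
noncomputable def walshPointSet (p : ℝ≥0∞) (k : ℕ) :
    Set (PiLp p fun _ : Fin k → Bool => ℝ) :=
  {0} ∪ Set.range (fun u => (WithLp.equiv p _).symm (walshRow k u)) ∪
    Set.range (fun u : Fin k → Bool => (WithLp.equiv p _).symm (Pi.single u 1))

open WithLp

theorem PiLp.norm_congr {ι : Type*} [Fintype ι] {p : ℝ≥0∞} {β γ : ι → Type*}
    [∀ i, Norm (β i)] [∀ i, Norm (γ i)] {f : PiLp p β} {g : PiLp p γ}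
    (h : ∀ i, ‖f i‖ = ‖g i‖) : ‖f‖ = ‖g‖ := by
  rcases p.trichotomy with rfl | rfl | hp
  · simp only [PiLp.norm_eq_card, h]
  · simp only [PiLp.norm_eq_ciSup, h]
  · simp only [PiLp.norm_eq_sum hp, h]

theorem PiLp.norm_toLp_of_forall_norm_eq {ι β : Type*} [Fintype ι] [Nonempty ι]
    [SeminormedAddCommGroup β] {p : ℝ≥0∞} [Fact (1 ≤ p)] {f : ι → β} {b : β}
    (hf : ∀ i, ‖f i‖ = ‖b‖) : ‖toLp p f‖ = (Fintype.card ι : ℝ) ^ (1 / p.toReal) * ‖b‖ := by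
  rw [PiLp.norm_congr (g := toLp p (Function.const ι b)) hf, PiLp.norm_toLp_const',
    ENNReal.toReal_div, ENNReal.toReal_one, NNReal.coe_natCast]

theorem walshRow_eq_prod (k : ℕ) (u v : Fin k → Bool) :
    walshRow k u v = ∏ i, if u i && v i then (-1 : ℝ) else 1 := by
  rw [walshRow, Finset.prod_ite, Finset.prod_const, Finset.prod_const_one, mul_one]

theorem norm_walshRow (k : ℕ) (u v : Fin k → Bool) : ‖walshRow k u v‖ = 1 := by
  rw [walshRow, norm_pow, norm_neg, norm_one, one_pow]

theorem sum_walshRow_mul_walshRow (k : ℕ) (v v' : Fin k → Bool) :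
    ∑ u, walshRow k u v * walshRow k u v' = if v = v' then (2 : ℝ) ^ k else 0 := by
  have hcoord : ∀ i, ∑ b : Bool, (if b && v i then (-1 : ℝ) else 1) *
      (if b && v' i then (-1 : ℝ) else 1) = if v i = v' i then 2 else 0 := by
    intro i
    cases v i <;> cases v' i <;> norm_num
  calc ∑ u, walshRow k u v * walshRow k u v'
      = ∏ i, ∑ b : Bool, (if b && v i then (-1 : ℝ) else 1) *
          (if b && v' i then (-1 : ℝ) else 1) := by
        rw [Fintype.prod_sum]
        simp_rw [walshRow_eq_prod, Finset.prod_mul_distrib]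
    _ = ∏ i, if v i = v' i then (2 : ℝ) else 0 := by simp_rw [hcoord]
    _ = if v = v' then (2 : ℝ) ^ k else 0 := by
        split_ifs with h
        · simp [h]
        · obtain ⟨i, hi⟩ := Function.ne_iff.mp h
          exact Finset.prod_eq_zero (Finset.mem_univ i) (if_neg hi)

theorem norm_toLp_walshRow (p : ℝ≥0∞) [Fact (1 ≤ p)] (k : ℕ) (u : Fin k → Bool) :
    ‖toLp p (walshRow k u)‖ = ((2 : ℝ) ^ k) ^ (1 / p.toReal) := by
  rw [PiLp.norm_toLp_of_forall_norm_eq (b := (1 : ℝ)) fun v => by rw [norm_walshRow, norm_one]]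
  simp

noncomputable def walshTransform {E : Type*} [AddCommMonoid E] [Module ℝ E] (k : ℕ)
    (x : (Fin k → Bool) → E) (u : Fin k → Bool) : E :=
  ∑ v, walshRow k u v • x v

theorem LinearMap.map_toLp_walshRow {E : Type*} [AddCommGroup E] [Module ℝ E] (p : ℝ≥0∞)
    (k : ℕ) (T : PiLp p (fun _ : Fin k → Bool => ℝ) →ₗ[ℝ] E) (u : Fin k → Bool) :
    T (toLp p (walshRow k u)) = walshTransform k (fun v => T (PiLp.single p v 1)) u := by
  conv_lhs => rw [← (PiLp.basisFun p ℝ _).sum_repr (toLp p (walshRow k u))]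
  simp [walshTransform, map_sum, map_smul]

section Hilbert

variable {H : Type*} [NormedAddCommGroup H] [InnerProductSpace ℝ H]

theorem sum_norm_sq_walshTransform (k : ℕ) (x : (Fin k → Bool) → H) :
    ∑ u, ‖walshTransform k x u‖ ^ 2 = 2 ^ k * ∑ v, ‖x v‖ ^ 2 := by
  calc ∑ u, ‖walshTransform k x u‖ ^ 2
      = ∑ v, ∑ v', (∑ u, walshRow k u v * walshRow k u v') * inner ℝ (x v) (x v') := by
        simp_rw [← real_inner_self_eq_norm_sq, walshTransform, sum_inner, inner_sum,
          real_inner_smul_left, real_inner_smul_right, Finset.sum_mul, mul_assoc]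
        rw [Finset.sum_comm]
        exact Finset.sum_congr rfl fun _ _ => Finset.sum_comm
    _ = 2 ^ k * ∑ v, ‖x v‖ ^ 2 := by
        simp_rw [sum_walshRow_mul_walshRow, ite_mul, zero_mul, Finset.sum_ite_eq,
          Finset.mem_univ, if_true, real_inner_self_eq_norm_sq, Finset.mul_sum]

theorem sq_le_two_pow_mul_sq_of_le_norm_walshTransform {k : ℕ} {x : (Fin k → Bool) → H}
    {s R : ℝ} (hs : 0 ≤ s)
    (hs_le : ∀ u, s ≤ ‖walshTransform k x u‖) (hR : ∀ v, ‖x v‖ ≤ R) :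
    s ^ 2 ≤ 2 ^ k * R ^ 2 := by
  have hcard : (Fintype.card (Fin k → Bool) : ℝ) = 2 ^ k := by simp
  have h : (2 : ℝ) ^ k * s ^ 2 ≤ 2 ^ k * (2 ^ k * R ^ 2) :=
    calc (2 : ℝ) ^ k * s ^ 2
        ≤ ∑ u, ‖walshTransform k x u‖ ^ 2 := by
          simpa [hcard] using Finset.card_nsmul_le_sum Finset.univ _ _
            fun u _ => pow_le_pow_left₀ hs (hs_le u) 2
      _ = 2 ^ k * ∑ v, ‖x v‖ ^ 2 := sum_norm_sq_walshTransform k x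
      _ ≤ 2 ^ k * (2 ^ k * R ^ 2) := by
          gcongr
          simpa [hcard] using Finset.sum_le_card_nsmul Finset.univ _ _
            fun v _ => pow_le_pow_left₀ (norm_nonneg _) (hR v) 2
  exact le_of_mul_le_mul_left h (by positivity)

theorem two_pow_mul_sq_le_sq_of_norm_walshTransform_le {k : ℕ} {x : (Fin k → Bool) → H}
    {r S : ℝ} (hr : 0 ≤ r)
    (hr_le : ∀ v, r ≤ ‖x v‖) (hS : ∀ u, ‖walshTransform k x u‖ ≤ S) :
    2 ^ k * r ^ 2 ≤ S ^ 2 := by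
  have hcard : (Fintype.card (Fin k → Bool) : ℝ) = 2 ^ k := by simp
  have h : (2 : ℝ) ^ k * (2 ^ k * r ^ 2) ≤ 2 ^ k * S ^ 2 :=
    calc (2 : ℝ) ^ k * (2 ^ k * r ^ 2)
        ≤ 2 ^ k * ∑ v, ‖x v‖ ^ 2 := by
          gcongr
          simpa [hcard] using Finset.card_nsmul_le_sum Finset.univ _ _
            fun v _ => pow_le_pow_left₀ hr (hr_le v) 2
      _ = ∑ u, ‖walshTransform k x u‖ ^ 2 := (sum_norm_sq_walshTransform k x).symm
      _ ≤ 2 ^ k * S ^ 2 := by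
          simpa [hcard] using Finset.sum_le_card_nsmul Finset.univ _ _
            fun u _ => pow_le_pow_left₀ (norm_nonneg _) (hS u) 2
  exact le_of_mul_le_mul_left h (by positivity)

end Hilbert

theorem Real.rpow_abs_sub_half_le {N L a : ℝ} (hN : 0 < N) (hL : 0 ≤ L)
    (h₁ : (N ^ a) ^ 2 ≤ N * L ^ 2) (h₂ : N ≤ (L * N ^ a) ^ 2) : N ^ |a - 1 / 2| ≤ L := by
  have hsplit : (N ^ a) ^ 2 = (N ^ (a - 1 / 2)) ^ 2 * N := by
    rw [← Real.rpow_natCast, ← Real.rpow_natCast, ← Real.rpow_mul hN.le,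
      ← Real.rpow_mul hN.le, ← Real.rpow_add_one hN.ne']
    congr 1
    ring
  rcases abs_choice (a - 1 / 2) with h | h <;> rw [h]
  · refine le_of_pow_le_pow_left₀ two_ne_zero hL ?_
    rw [hsplit] at h₁
    nlinarith
  · rw [Real.rpow_neg hN.le]
    refine le_of_pow_le_pow_left₀ two_ne_zero hL ?_
    rw [mul_pow, hsplit] at h₂
    rw [inv_pow, inv_le_iff_one_le_mul₀ (by positivity)]
    nlinarith

theorem stmt_5_general (p : ℝ≥0∞) [Fact (1 ≤ p)] (k : ℕ)
    (H : Type) [NormedAddCommGroup H] [InnerProductSpace ℝ H]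
    (L : ℝ)
    (T : PiLp p (fun _ : Fin k → Bool => ℝ) →ₗ[ℝ] H)
    (hT : ∀ u ∈ walshPointSet p k, ∀ v ∈ walshPointSet p k,
      ‖u - v‖ ≤ ‖T u - T v‖ ∧ ‖T u - T v‖ ≤ L * ‖u - v‖) :
    ((2 : ℝ) ^ k) ^ |1 / p.toReal - 1 / 2| ≤ L := by
  have hT₀ : ∀ x ∈ walshPointSet p k, ‖x‖ ≤ ‖T x‖ ∧ ‖T x‖ ≤ L * ‖x‖ := fun x hx => by
    simpa using hT x hx 0 (by simp [walshPointSet])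
  set e : (Fin k → Bool) → H := fun v => T (PiLp.single p v 1)
  have he : ∀ v, 1 ≤ ‖e v‖ ∧ ‖e v‖ ≤ L := fun v => by
    simpa using hT₀ _ (Or.inr ⟨v, rfl⟩)
  have hw : ∀ u, ((2 : ℝ) ^ k) ^ (1 / p.toReal) ≤ ‖walshTransform k e u‖ ∧
      ‖walshTransform k e u‖ ≤ L * ((2 : ℝ) ^ k) ^ (1 / p.toReal) := fun u => by
    rw [← T.map_toLp_walshRow, ← norm_toLp_walshRow]
    exact hT₀ _ (Or.inl (Or.inr ⟨u, rfl⟩))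
  have hL : 0 ≤ L := zero_le_one.trans ((he default).1.trans (he default).2)
  refine Real.rpow_abs_sub_half_le (by positivity) hL ?_ ?_
  · exact sq_le_two_pow_mul_sq_of_le_norm_walshTransform (by positivity)
      (fun u => (hw u).1) (fun v => (he v).2)
  · simpa using two_pow_mul_sq_le_sq_of_norm_walshTransform_le zero_le_one
      (fun v => (he v).1) (fun u => (hw u).2)

/-- Fix `1 ≤ p ≤ ∞` and `k`.  Any linear map `T` from `ℓ_p^{2^k}` into a
Hilbert space `H` which is non-contracting and `L`-Lipschitz on the `n = 2·2^k + 1` point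
set `A = {0} ∪ {walsh rows} ∪ {standard basis}` satisfies
`L ≥ 2^{k |1/p - 1/2|} = ((n-1)/2)^{|1/p - 1/2|}` (for `p = ∞`, `1/p := 0`). -/
theorem stmt_5 (p : ℝ≥0∞) [Fact (1 ≤ p)] (k : ℕ)
    (H : Type) [NormedAddCommGroup H] [InnerProductSpace ℝ H] [CompleteSpace H]
    (L : ℝ) (hL : 1 ≤ L)
    (T : PiLp p (fun _ : Fin k → Bool => ℝ) →ₗ[ℝ] H)
    (hT : ∀ u ∈ walshPointSet p k, ∀ v ∈ walshPointSet p k,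
      ‖u - v‖ ≤ ‖T u - T v‖ ∧ ‖T u - T v‖ ≤ L * ‖u - v‖) :
    ((2 : ℝ) ^ k) ^ |1 / p.toReal - 1 / 2| ≤ L :=
  stmt_5_general p k H L T hT
end

section
/- Let 1 < p ≤ 2, let (M, μ) be a measure space, and let x, y, z, w ∈ L_p(μ). Then max{‖x − y‖_p², ‖y − z‖_p², ‖z − w‖_p², ‖w − x‖_p²} ≥ (1/4)·‖x − z‖_p² + ((p − 1)/4)·‖y − w‖_p². -/
/-!
Integrating the two-point inequality `(a² + (p - 1) b²) ^ (p / 2) ≤ (|a + b| ^ p + |a - b| ^ p) / 2`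
and applying the reverse Minkowski inequality in `L_{p/2}` (note `p / 2 ≤ 1`) gives the
Ball–Carlen–Lieb inequality `‖f‖² + (p - 1) ‖g‖² ≤ ((‖f + g‖ ^ p + ‖f - g‖ ^ p) / 2) ^ (2 / p)`,
hence, by the power mean inequality, `‖f‖² + (p - 1) ‖g‖² ≤ (‖f + g‖² + ‖f - g‖²) / 2`.
Used at the two halves `x, y, z` and `z, w, x` of the quadrilateral, and once more to compare the
second differences `x - 2y + z` and `z - 2w + x` (whose half-difference is `w - y`), this yields
`‖x - z‖² + (p - 1) ‖y - w‖² ≤ ‖x - y‖² + ‖y - z‖² + ‖z - w‖² + ‖w - x‖²`,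
and the right-hand side is at most four times the maximum.

The two-point inequality reduces by scaling to
`(1 + (p - 1) t²) ^ (p / 2) ≤ 1 + p (p - 1) t² / 2 ≤ ((1 + t) ^ p + (1 - t) ^ p) / 2` on `[0, 1]`:
Bernoulli's inequality, then the second derivative of the right-hand side is at least `p (p - 1)`.
-/

open MeasureTheory Real Set
open scoped ENNReal

theorem two_le_one_add_rpow_add_one_sub_rpow {s t : ℝ} (hs : s ≤ 0) (ht : |t| < 1) :
    2 ≤ (1 + t) ^ s + (1 - t) ^ s := by
  obtain ⟨ht₁, ht₂⟩ := abs_lt.1 ht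
  have hprod : 1 ≤ (1 + t) ^ s * (1 - t) ^ s := by
    rw [← mul_rpow (by linarith) (by linarith)]
    exact one_le_rpow_of_pos_of_le_one_of_nonpos (by nlinarith) (by nlinarith [sq_nonneg t]) hs
  nlinarith [sq_nonneg ((1 + t) ^ s - (1 - t) ^ s), rpow_nonneg (by linarith : 0 ≤ 1 + t) s,
    rpow_nonneg (by linarith : 0 ≤ 1 - t) s]

theorem hasDerivAt_one_add_rpow {q t : ℝ} (ht : 1 + t ≠ 0) :
    HasDerivAt (fun t => (1 + t) ^ q) (q * (1 + t) ^ (q - 1)) t := by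
  simpa using ((hasDerivAt_id t).const_add 1).rpow_const (p := q) (Or.inl ht)

theorem hasDerivAt_one_sub_rpow {q t : ℝ} (ht : 1 - t ≠ 0) :
    HasDerivAt (fun t => (1 - t) ^ q) (-(q * (1 - t) ^ (q - 1))) t := by
  simpa using ((hasDerivAt_id t).const_sub 1).rpow_const (p := q) (Or.inl ht)

theorem two_mul_mul_le_one_add_rpow_sub_one_sub_rpow {q t : ℝ} (hq0 : 0 < q) (hq1 : q ≤ 1)
    (ht : t ∈ Icc (0 : ℝ) 1) :
    2 * q * t ≤ (1 + t) ^ q - (1 - t) ^ q := by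
  have hmono : MonotoneOn (fun t : ℝ => (1 + t) ^ q - (1 - t) ^ q - 2 * q * t) (Icc 0 1) := by
    refine monotoneOn_of_hasDerivWithinAt_nonneg
      (f' := fun x => q * ((1 + x) ^ (q - 1) + (1 - x) ^ (q - 1) - 2)) (convex_Icc 0 1)
      (by have := continuous_rpow_const hq0.le; fun_prop) (fun x hx => ?_) (fun x hx => ?_) <;>
      rw [interior_Icc] at hx
    · have h := ((hasDerivAt_one_add_rpow (q := q) (by linarith [hx.1])).sub
        (hasDerivAt_one_sub_rpow (q := q) (by linarith [hx.2]))).sub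
        ((hasDerivAt_id x).const_mul (2 * q))
      exact (h.congr_deriv (by simp; ring)).hasDerivWithinAt
    · have := two_le_one_add_rpow_add_one_sub_rpow (s := q - 1) (by linarith)
        (abs_lt.2 ⟨by linarith [hx.1], hx.2⟩)
      exact mul_nonneg hq0.le (by linarith)
  simpa using hmono (left_mem_Icc.2 zero_le_one) ht ht.1

theorem two_add_mul_sq_le_one_add_rpow_add_one_sub_rpow {p t : ℝ} (hp1 : 1 < p) (hp2 : p ≤ 2)
    (ht : t ∈ Icc (0 : ℝ) 1) :
    2 + p * (p - 1) * t ^ 2 ≤ (1 + t) ^ p + (1 - t) ^ p := by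
  have hmono : MonotoneOn (fun t : ℝ => (1 + t) ^ p + (1 - t) ^ p - p * (p - 1) * t ^ 2)
      (Icc 0 1) := by
    refine monotoneOn_of_hasDerivWithinAt_nonneg
      (f' := fun x => p * ((1 + x) ^ (p - 1) - (1 - x) ^ (p - 1) - 2 * (p - 1) * x))
      (convex_Icc 0 1) (by have := continuous_rpow_const (by linarith : 0 ≤ p); fun_prop)
      (fun x hx => ?_) (fun x hx => ?_) <;> rw [interior_Icc] at hx
    · have h := ((hasDerivAt_one_add_rpow (q := p) (by linarith [hx.1])).add
        (hasDerivAt_one_sub_rpow (q := p) (by linarith [hx.2]))).sub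
        ((hasDerivAt_pow 2 x).const_mul (p * (p - 1)))
      exact (h.congr_deriv (by norm_num; ring)).hasDerivWithinAt
    · have := two_mul_mul_le_one_add_rpow_sub_one_sub_rpow (q := p - 1) (by linarith)
        (by linarith) (Ioo_subset_Icc_self hx)
      exact mul_nonneg (by linarith) (by linarith)
  have := hmono (left_mem_Icc.2 zero_le_one) ht ht.1
  norm_num at this
  linarith

theorem two_point_ineq_of_le {p a b : ℝ} (hp1 : 1 < p) (hp2 : p ≤ 2) (hb : 0 ≤ b)
    (hba : b ≤ a) :
    (a ^ 2 + (p - 1) * b ^ 2) ^ (p / 2) ≤ ((a + b) ^ p + (a - b) ^ p) / 2 := by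
  obtain rfl | ha := (hb.trans hba).eq_or_lt
  · obtain rfl : b = 0 := le_antisymm hba hb
    simp [zero_rpow (by positivity : p / 2 ≠ 0), zero_rpow (by positivity : p ≠ 0)]
  obtain ⟨t, ht, rfl⟩ : ∃ t ∈ Icc (0 : ℝ) 1, b = a * t :=
    ⟨b / a, ⟨by positivity, div_le_one_of_le₀ hba ha.le⟩, by field_simp⟩
  have hbernoulli : (1 + (p - 1) * t ^ 2) ^ (p / 2) ≤ 1 + p / 2 * ((p - 1) * t ^ 2) :=
    rpow_one_add_le_one_add_mul_self (by nlinarith [ht.1]) (by linarith) (by linarith)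
  have hquad := two_add_mul_sq_le_one_add_rpow_add_one_sub_rpow hp1 hp2 ht
  calc (a ^ 2 + (p - 1) * (a * t) ^ 2) ^ (p / 2)
      = a ^ p * (1 + (p - 1) * t ^ 2) ^ (p / 2) := by
        rw [show a ^ 2 + (p - 1) * (a * t) ^ 2 = a ^ 2 * (1 + (p - 1) * t ^ 2) by ring,
          mul_rpow (by positivity) (by nlinarith [ht.1]), ← rpow_natCast, ← rpow_mul ha.le,
          Nat.cast_ofNat, mul_div_cancel₀ p two_ne_zero]
    _ ≤ a ^ p * (((1 + t) ^ p + (1 - t) ^ p) / 2) := by gcongr; linarith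
    _ = ((a + a * t) ^ p + (a - a * t) ^ p) / 2 := by
        rw [show a + a * t = a * (1 + t) by ring, show a - a * t = a * (1 - t) by ring,
          mul_rpow ha.le (by linarith [ht.1]), mul_rpow ha.le (by linarith [ht.2])]
        ring

theorem two_point_ineq {p : ℝ} (hp1 : 1 < p) (hp2 : p ≤ 2) (a b : ℝ) :
    (a ^ 2 + (p - 1) * b ^ 2) ^ (p / 2) ≤ (|a + b| ^ p + |a - b| ^ p) / 2 := by
  wlog hb : 0 ≤ b generalizing b
  · simpa [← sub_eq_add_neg, add_comm] using this (-b) (by linarith)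
  wlog ha : 0 ≤ a generalizing a
  · have := this (-a) (by linarith)
    rwa [neg_sq, neg_add_eq_sub, abs_sub_comm, ← neg_add', abs_neg,
      add_comm (|a - b| ^ p)] at this
  wlog hba : b ≤ a generalizing a b
  · calc (a ^ 2 + (p - 1) * b ^ 2) ^ (p / 2) ≤ (b ^ 2 + (p - 1) * a ^ 2) ^ (p / 2) := by
          gcongr ?_ ^ _
          nlinarith [mul_le_mul (not_le.1 hba).le (not_le.1 hba).le ha hb]
      _ ≤ (|b + a| ^ p + |b - a| ^ p) / 2 := this a ha b hb (by linarith)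
      _ = _ := by rw [add_comm b a, abs_sub_comm]
  rw [abs_of_nonneg (by linarith), abs_of_nonneg (by linarith)]
  exact two_point_ineq_of_le hp1 hp2 hb hba

theorem two_point_ineq_enorm {p : ℝ} (hp1 : 1 < p) (hp2 : p ≤ 2) (a b : ℝ) :
    (‖a‖ₑ ^ 2 + ENNReal.ofReal (p - 1) * ‖b‖ₑ ^ 2) ^ (p / 2) ≤
      (‖a + b‖ₑ ^ p + ‖a - b‖ₑ ^ p) / 2 := by
  have hp0 : 0 ≤ p := by linarith
  simp only [Real.enorm_eq_ofReal_abs]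
  rw [← ENNReal.ofReal_pow (abs_nonneg _), ← ENNReal.ofReal_pow (abs_nonneg _), sq_abs, sq_abs,
    ← ENNReal.ofReal_mul (by linarith),
    ← ENNReal.ofReal_add (by positivity) (by nlinarith [sq_nonneg b]),
    ENNReal.ofReal_rpow_of_nonneg (by nlinarith [sq_nonneg a, sq_nonneg b]) (by positivity),
    ENNReal.ofReal_rpow_of_nonneg (abs_nonneg _) hp0,
    ENNReal.ofReal_rpow_of_nonneg (abs_nonneg _) hp0,
    ← ENNReal.ofReal_add (by positivity) (by positivity), ← ENNReal.ofReal_ofNat 2,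
    ← ENNReal.ofReal_div_of_pos two_pos]
  exact ENNReal.ofReal_le_ofReal (two_point_ineq hp1 hp2 a b)

theorem rpow_mean_le_sq_mean {p X Y : ℝ} (hp0 : 0 < p) (hp2 : p ≤ 2) (hX : 0 ≤ X) (hY : 0 ≤ Y) :
    ((X ^ p + Y ^ p) / 2) ^ (2 / p) ≤ (X ^ 2 + Y ^ 2) / 2 := by
  have h := (convexOn_rpow (p := 2 / p) (by rw [le_div_iff₀ hp0]; linarith)).2
    (mem_Ici.2 (rpow_nonneg hX p)) (mem_Ici.2 (rpow_nonneg hY p)) (by norm_num : (0 : ℝ) ≤ 1 / 2)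
    (by norm_num : (0 : ℝ) ≤ 1 / 2) (by norm_num)
  simp only [smul_eq_mul, ← rpow_mul hX, ← rpow_mul hY, mul_div_cancel₀ 2 hp0.ne', rpow_two] at h
  rwa [show (X ^ p + Y ^ p) / 2 = 1 / 2 * X ^ p + 1 / 2 * Y ^ p by ring,
    show (X ^ 2 + Y ^ 2) / 2 = 1 / 2 * X ^ 2 + 1 / 2 * Y ^ 2 by ring]

theorem ENNReal.arith_mean2_rpow_le_rpow_arith_mean {r : ℝ} (hr0 : 0 < r) (hr1 : r ≤ 1)
    (w₁ w₂ z₁ z₂ : ℝ≥0∞) (hw : w₁ + w₂ = 1) :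
    w₁ * z₁ ^ r + w₂ * z₂ ^ r ≤ (w₁ * z₁ + w₂ * z₂) ^ r := by
  have h := ENNReal.rpow_arith_mean_le_arith_mean2_rpow w₁ w₂ (z₁ ^ r) (z₂ ^ r) hw
    (one_le_inv_iff₀.2 ⟨hr0, hr1⟩)
  rwa [← ENNReal.rpow_mul, ← ENNReal.rpow_mul, mul_inv_cancel₀ hr0.ne', ENNReal.rpow_one,
    ENNReal.rpow_one, ENNReal.rpow_inv_le_iff hr0] at h

section Integral

variable {α : Type*} [MeasurableSpace α] {μ : Measure α}

theorem ENNReal.lintegral_rpow_div_const {r : ℝ} (hr : 0 ≤ r) (f : α → ℝ≥0∞) {c : ℝ≥0∞}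
    (hc : c ≠ 0) :
    ∫⁻ a, (f a / c) ^ r ∂μ = (∫⁻ a, f a ^ r ∂μ) / c ^ r := by
  simp_rw [ENNReal.div_rpow_of_nonneg _ _ hr, div_eq_mul_inv]
  exact lintegral_mul_const' _ _ (by simp [ENNReal.rpow_eq_zero_iff, hc, hr.not_gt])

theorem ENNReal.lintegral_rpow_div_Lp_eq_one {r : ℝ} (hr : 0 < r) {f : α → ℝ≥0∞}
    (h0 : (∫⁻ a, f a ^ r ∂μ) ^ (1 / r) ≠ 0) (htop : (∫⁻ a, f a ^ r ∂μ) ^ (1 / r) ≠ ∞) :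
    ∫⁻ a, (f a / (∫⁻ a, f a ^ r ∂μ) ^ (1 / r)) ^ r ∂μ = 1 := by
  rw [ENNReal.lintegral_rpow_div_const hr.le _ h0, ← ENNReal.rpow_mul, one_div_mul_cancel hr.ne',
    ENNReal.rpow_one]
  exact ENNReal.div_self (fun h => h0 (by simp [h, hr])) (fun h => htop (by simp [h, hr]))

theorem ENNReal.add_lintegral_Lp_le_lintegral_Lp_add_of_ne {r : ℝ} (hr0 : 0 < r) (hr1 : r ≤ 1)
    {f g : α → ℝ≥0∞} (hf : AEMeasurable f μ) (hA0 : (∫⁻ a, f a ^ r ∂μ) ^ (1 / r) ≠ 0)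
    (hAt : (∫⁻ a, f a ^ r ∂μ) ^ (1 / r) ≠ ∞) (hB0 : (∫⁻ a, g a ^ r ∂μ) ^ (1 / r) ≠ 0)
    (hBt : (∫⁻ a, g a ^ r ∂μ) ^ (1 / r) ≠ ∞) :
    (∫⁻ a, f a ^ r ∂μ) ^ (1 / r) + (∫⁻ a, g a ^ r ∂μ) ^ (1 / r) ≤
      (∫⁻ a, (f a + g a) ^ r ∂μ) ^ (1 / r) := by
  set A := (∫⁻ a, f a ^ r ∂μ) ^ (1 / r)
  set B := (∫⁻ a, g a ^ r ∂μ) ^ (1 / r)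
  set c := A + B
  have hc0 : c ≠ 0 := by simp [c, hA0]
  have hct : c ≠ ∞ := ENNReal.add_ne_top.2 ⟨hAt, hBt⟩
  have hw : A / c + B / c = 1 := by rw [ENNReal.div_add_div_same, ENNReal.div_self hc0 hct]
  have hcancel : ∀ {X : ℝ≥0∞} (y : ℝ≥0∞), X ≠ 0 → X ≠ ∞ → X / c * (y / X) = y / c :=
    fun y hX0 hXt => by rw [mul_comm, ← mul_div_assoc, ENNReal.div_mul_cancel hX0 hXt]
  have hconcave : ∀ a, A / c * (f a / A) ^ r + B / c * (g a / B) ^ r ≤ ((f a + g a) / c) ^ r :=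
    fun a => by
      simpa [hcancel _ hA0 hAt, hcancel _ hB0 hBt, ENNReal.div_add_div_same] using
        ENNReal.arith_mean2_rpow_le_rpow_arith_mean hr0 hr1 _ _ (f a / A) (g a / B) hw
  have hone : 1 ≤ (∫⁻ a, (f a + g a) ^ r ∂μ) / c ^ r :=
    calc 1 = A / c * ∫⁻ a, (f a / A) ^ r ∂μ + B / c * ∫⁻ a, (g a / B) ^ r ∂μ := by
          rw [ENNReal.lintegral_rpow_div_Lp_eq_one hr0 hA0 hAt,
            ENNReal.lintegral_rpow_div_Lp_eq_one hr0 hB0 hBt, mul_one, mul_one, hw]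
      _ = ∫⁻ a, A / c * (f a / A) ^ r + B / c * (g a / B) ^ r ∂μ := by
          rw [lintegral_add_left' (((hf.div_const A).pow_const r).const_mul _),
            lintegral_const_mul' _ _ (ENNReal.div_ne_top hAt hc0),
            lintegral_const_mul' _ _ (ENNReal.div_ne_top hBt hc0)]
      _ ≤ ∫⁻ a, ((f a + g a) / c) ^ r ∂μ := lintegral_mono hconcave
      _ = _ := ENNReal.lintegral_rpow_div_const hr0.le _ hc0
  rw [ENNReal.le_div_iff_mul_le (Or.inl (by simp [hc0, hr0.le])) (Or.inl (by simp [hct, hr0.le])),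
    one_mul] at hone
  rw [one_div, ENNReal.le_rpow_inv_iff hr0]
  exact hone

theorem ENNReal.add_lintegral_Lp_le_lintegral_Lp_add {r : ℝ} (hr0 : 0 < r) (hr1 : r ≤ 1)
    {f g : α → ℝ≥0∞} (hf : AEMeasurable f μ) :
    (∫⁻ a, f a ^ r ∂μ) ^ (1 / r) + (∫⁻ a, g a ^ r ∂μ) ^ (1 / r) ≤
      (∫⁻ a, (f a + g a) ^ r ∂μ) ^ (1 / r) := by
  have hfC : (∫⁻ a, f a ^ r ∂μ) ^ (1 / r) ≤ (∫⁻ a, (f a + g a) ^ r ∂μ) ^ (1 / r) :=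
    ENNReal.rpow_le_rpow (lintegral_mono fun a => by gcongr; exact le_self_add) (by positivity)
  have hgC : (∫⁻ a, g a ^ r ∂μ) ^ (1 / r) ≤ (∫⁻ a, (f a + g a) ^ r ∂μ) ^ (1 / r) :=
    ENNReal.rpow_le_rpow (lintegral_mono fun a => by gcongr; exact le_add_self) (by positivity)
  rcases eq_or_ne ((∫⁻ a, f a ^ r ∂μ) ^ (1 / r)) 0 with hA0 | hA0
  · rwa [hA0, zero_add]
  rcases eq_or_ne ((∫⁻ a, g a ^ r ∂μ) ^ (1 / r)) 0 with hB0 | hB0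
  · rwa [hB0, add_zero]
  rcases eq_or_ne ((∫⁻ a, f a ^ r ∂μ) ^ (1 / r)) ∞ with hAt | hAt
  · rw [hAt, top_add]; rwa [hAt] at hfC
  rcases eq_or_ne ((∫⁻ a, g a ^ r ∂μ) ^ (1 / r)) ∞ with hBt | hBt
  · rw [hBt, add_top]; rwa [hBt] at hgC
  exact ENNReal.add_lintegral_Lp_le_lintegral_Lp_add_of_ne hr0 hr1 hf hA0 hAt hB0 hBt

variable {E : Type*} [NormedAddCommGroup E]

theorem Lp.lintegral_enorm_rpow {p : ℝ} (hp : 0 < p) (f : Lp E (ENNReal.ofReal p) μ) :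
    ∫⁻ a, ‖f a‖ₑ ^ p ∂μ = ‖f‖ₑ ^ p := by
  rw [Lp.enorm_def, eLpNorm_eq_eLpNorm' (by simpa using hp) ENNReal.ofReal_ne_top,
    ENNReal.toReal_ofReal hp.le, lintegral_rpow_enorm_eq_rpow_eLpNorm' hp]

theorem Lp.lintegral_Lp_half_mul_enorm_sq {p : ℝ} (hp : 0 < p) (c : ℝ≥0∞)
    (f : Lp E (ENNReal.ofReal p) μ) :
    (∫⁻ a, (c * ‖f a‖ₑ ^ 2) ^ (p / 2) ∂μ) ^ (1 / (p / 2)) = c * ‖f‖ₑ ^ 2 := by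
  have hsq_rpow : ∀ t : ℝ≥0∞, (t ^ 2) ^ (p / 2) = t ^ p := fun t => by
    rw [← ENNReal.rpow_natCast, ← ENNReal.rpow_mul, Nat.cast_ofNat, mul_div_cancel₀ p two_ne_zero]
  simp_rw [ENNReal.mul_rpow_of_nonneg _ _ (by positivity : 0 ≤ p / 2), hsq_rpow]
  rw [lintegral_const_mul'' _ ((Lp.aestronglyMeasurable f).enorm.pow_const p),
    Lp.lintegral_enorm_rpow hp, ENNReal.mul_rpow_of_nonneg _ _ (by positivity),
    ← ENNReal.rpow_mul, ← ENNReal.rpow_mul, mul_one_div_cancel (by positivity), ENNReal.rpow_one,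
    ← ENNReal.rpow_natCast]
  congr 2; field_simp; norm_num

theorem Lp.enorm_sq_add_mul_enorm_sq_le {p : ℝ} (hp1 : 1 < p) (hp2 : p ≤ 2)
    (f g : Lp ℝ (ENNReal.ofReal p) μ) :
    ‖f‖ₑ ^ 2 + ENNReal.ofReal (p - 1) * ‖g‖ₑ ^ 2 ≤
      ((‖f + g‖ₑ ^ p + ‖f - g‖ₑ ^ p) / 2) ^ (2 / p) := by
  have hp0 : 0 < p := by linarith
  calc ‖f‖ₑ ^ 2 + ENNReal.ofReal (p - 1) * ‖g‖ₑ ^ 2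
      = (∫⁻ a, (1 * ‖f a‖ₑ ^ 2) ^ (p / 2) ∂μ) ^ (1 / (p / 2)) +
        (∫⁻ a, (ENNReal.ofReal (p - 1) * ‖g a‖ₑ ^ 2) ^ (p / 2) ∂μ) ^ (1 / (p / 2)) := by
        rw [Lp.lintegral_Lp_half_mul_enorm_sq hp0, Lp.lintegral_Lp_half_mul_enorm_sq hp0, one_mul]
    _ ≤ (∫⁻ a, (1 * ‖f a‖ₑ ^ 2 + ENNReal.ofReal (p - 1) * ‖g a‖ₑ ^ 2) ^ (p / 2) ∂μ) ^
          (1 / (p / 2)) :=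
        ENNReal.add_lintegral_Lp_le_lintegral_Lp_add (by positivity) (by linarith)
          (((Lp.aestronglyMeasurable f).enorm.pow_const 2).const_mul 1)
    _ ≤ (∫⁻ a, (‖(f + g) a‖ₑ ^ p + ‖(f - g) a‖ₑ ^ p) / 2 ∂μ) ^ (1 / (p / 2)) := by
        gcongr ?_ ^ _
        refine lintegral_mono_ae ?_
        filter_upwards [Lp.coeFn_add f g, Lp.coeFn_sub f g] with a hadd hsub
        rw [hadd, hsub, one_mul]
        exact two_point_ineq_enorm hp1 hp2 (f a) (g a)
    _ = ((‖f + g‖ₑ ^ p + ‖f - g‖ₑ ^ p) / 2) ^ (2 / p) := by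
        simp_rw [div_eq_mul_inv _ (2 : ℝ≥0∞)]
        rw [lintegral_mul_const' _ _ (by simp), lintegral_add_left'
          ((Lp.aestronglyMeasurable (f + g)).enorm.pow_const p), Lp.lintegral_enorm_rpow hp0,
          Lp.lintegral_enorm_rpow hp0, one_div_div]

theorem Lp.norm_sq_add_mul_norm_sq_le {p : ℝ} (hp1 : 1 < p) (hp2 : p ≤ 2)
    (f g : Lp ℝ (ENNReal.ofReal p) μ) :
    ‖f‖ ^ 2 + (p - 1) * ‖g‖ ^ 2 ≤ (‖f + g‖ ^ 2 + ‖f - g‖ ^ 2) / 2 := by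
  have hp0 : 0 < p := by linarith
  have hnonneg : ∀ h : Lp ℝ (ENNReal.ofReal p) μ, 0 ≤ ‖h‖ := fun h => by
    rw [Lp.norm_def]; exact ENNReal.toReal_nonneg
  have henorm : ∀ h : Lp ℝ (ENNReal.ofReal p) μ, ‖h‖ₑ = ENNReal.ofReal ‖h‖ := fun h => by
    rw [Lp.enorm_def, Lp.norm_def, ENNReal.ofReal_toReal (Lp.eLpNorm_ne_top h)]
  have hmean_nonneg : 0 ≤ (‖f + g‖ ^ p + ‖f - g‖ ^ p) / 2 :=
    div_nonneg (add_nonneg (rpow_nonneg (hnonneg _) p) (rpow_nonneg (hnonneg _) p)) zero_le_two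
  have key := Lp.enorm_sq_add_mul_enorm_sq_le hp1 hp2 f g
  simp only [henorm] at key
  rw [← ENNReal.ofReal_pow (hnonneg _), ← ENNReal.ofReal_pow (hnonneg _),
    ← ENNReal.ofReal_mul (by linarith),
    ← ENNReal.ofReal_add (sq_nonneg _) (mul_nonneg (by linarith) (sq_nonneg _)),
    ENNReal.ofReal_rpow_of_nonneg (hnonneg _) hp0.le,
    ENNReal.ofReal_rpow_of_nonneg (hnonneg _) hp0.le,
    ← ENNReal.ofReal_add (rpow_nonneg (hnonneg _) p) (rpow_nonneg (hnonneg _) p),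
    ← ENNReal.ofReal_ofNat 2, ← ENNReal.ofReal_div_of_pos two_pos,
    ENNReal.ofReal_rpow_of_nonneg hmean_nonneg (by positivity),
    ENNReal.ofReal_le_ofReal_iff (rpow_nonneg hmean_nonneg _)] at key
  exact key.trans (rpow_mean_le_sq_mean hp0 hp2 (hnonneg _) (hnonneg _))

end Integral

theorem short_diagonals_of_smooth {E : Type*} [NormedAddCommGroup E] [NormedSpace ℝ E] {c : ℝ}
    (hc : 0 ≤ c) (hE : ∀ f g : E, ‖f‖ ^ 2 + c * ‖g‖ ^ 2 ≤ (‖f + g‖ ^ 2 + ‖f - g‖ ^ 2) / 2)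
    (x y z w : E) :
    ‖x - z‖ ^ 2 + c * ‖y - w‖ ^ 2 ≤ ‖x - y‖ ^ 2 + ‖y - z‖ ^ 2 + ‖z - w‖ ^ 2 + ‖w - x‖ ^ 2 := by
  have hdouble : ∀ v : E, ‖v + v‖ ^ 2 = 4 * ‖v‖ ^ 2 := fun v => by
    rw [← two_smul ℝ v, norm_smul]; norm_num; ring
  have hxyz := hE (x - z) (x - y - (y - z))
  rw [show x - z + (x - y - (y - z)) = x - y + (x - y) by abel,
    show x - z - (x - y - (y - z)) = y - z + (y - z) by abel, hdouble, hdouble] at hxyz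
  have hzwx := hE (z - x) (z - w - (w - x))
  rw [show z - x + (z - w - (w - x)) = z - w + (z - w) by abel,
    show z - x - (z - w - (w - x)) = w - x + (w - x) by abel, hdouble, hdouble,
    norm_sub_rev z x] at hzwx
  have hmid := hE (w - y) (x - y + (z - w))
  rw [show w - y + (x - y + (z - w)) = x - y - (y - z) by abel,
    show w - y - (x - y + (z - w)) = -(z - w - (w - x)) by abel, norm_neg, norm_sub_rev w y] at hmid
  nlinarith [mul_nonneg hc (sq_nonneg ‖x - y + (z - w)‖)]

/-- (Short diagonals / maximum form.)  Let `1 < p ≤ 2`, `(M, μ)` a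
measure space, and `x, y, z, w ∈ L_p(μ)`.  Then
`max {‖x-y‖², ‖y-z‖², ‖z-w‖², ‖w-x‖²} ≥ (1/4) ‖x-z‖² + ((p-1)/4) ‖y-w‖²`. -/
theorem stmt_10 (p : ℝ) (hp1 : 1 < p) (hp2 : p ≤ 2)
    {M : Type} [MeasurableSpace M] (μ : Measure M)
    (x y z w : Lp ℝ (ENNReal.ofReal p) μ) :
    (1 / 4) * ‖x - z‖ ^ 2 + ((p - 1) / 4) * ‖y - w‖ ^ 2 ≤
      max (max (‖x - y‖ ^ 2) (‖y - z‖ ^ 2)) (max (‖z - w‖ ^ 2) (‖w - x‖ ^ 2)) := by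
  have : Fact (1 ≤ ENNReal.ofReal p) := ⟨by rw [ENNReal.one_le_ofReal]; linarith⟩
  have h := short_diagonals_of_smooth (by linarith) (Lp.norm_sq_add_mul_norm_sq_le hp1 hp2) x y z w
  set m := max (max (‖x - y‖ ^ 2) (‖y - z‖ ^ 2)) (max (‖z - w‖ ^ 2) (‖w - x‖ ^ 2))
  have hxy : ‖x - y‖ ^ 2 ≤ m := le_max_of_le_left (le_max_left _ _)
  have hyz : ‖y - z‖ ^ 2 ≤ m := le_max_of_le_left (le_max_right _ _)
  have hzw : ‖z - w‖ ^ 2 ≤ m := le_max_of_le_right (le_max_left _ _)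
  have hwx : ‖w - x‖ ^ 2 ≤ m := le_max_of_le_right (le_max_right _ _)
  linarith
end

section
/- There is a universal constant c > 0 with the following property. Let (X, d_X) be an n-point metric space, n ≥ 3, and K > 0 be such that for every q ∈ [2, ∞), every m ∈ ℕ, and every map g : X → ℝ^m with s·d_X(u,v) ≤ ‖g(u) − g(v)‖_q ≤ D·s·d_X(u,v) for all u, v ∈ X (for some s > 0), one has D ≥ K·(log n)/q. Then for every integer d ≥ 2 and every α ≥ 1, if there is a map f : X → ℝ^d with s·d_X(u,v) ≤ ‖f(u) − f(v)‖_∞ ≤ α·s·d_X(u,v) for all u, v ∈ X (for some s > 0), then α ≥ c·K·(log n)/(log d). -/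
lemma lq_bound_aux (m : ℕ) (x : Fin m → ℝ) (q : ℝ) (hq : 1 ≤ q) :
    ‖x‖ ≤ (∑ j, |x j| ^ q) ^ (1/q) ∧
    (∑ j, |x j| ^ q) ^ (1/q) ≤ (m:ℝ) ^ (1/q) * ‖x‖ := by
  have hq0 : 0 < q := lt_of_lt_of_le one_pos hq
  have hS0 : 0 ≤ ∑ j, |x j| ^ q :=
    Finset.sum_nonneg fun j _ => Real.rpow_nonneg (abs_nonneg _) q
  constructor
  · rw [pi_norm_le_iff_of_nonneg (Real.rpow_nonneg hS0 _)]
    intro i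
    rw [Real.norm_eq_abs]
    calc |x i| = (|x i| ^ q) ^ (1/q) := by
          rw [one_div, Real.rpow_rpow_inv (abs_nonneg _) hq0.ne']
      _ ≤ (∑ j, |x j| ^ q) ^ (1/q) := by
          exact Real.rpow_le_rpow (Real.rpow_nonneg (abs_nonneg _) _)
            (Finset.single_le_sum (fun j _ => Real.rpow_nonneg (abs_nonneg _) q)
              (Finset.mem_univ i)) (by positivity)
  · have h1 : ∑ j, |x j| ^ q ≤ (m : ℝ) * ‖x‖ ^ q := by
      calc ∑ j, |x j| ^ q ≤ ∑ _j : Fin m, ‖x‖ ^ q := by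
            apply Finset.sum_le_sum
            intro j _
            apply Real.rpow_le_rpow (abs_nonneg _) _ hq0.le
            rw [← Real.norm_eq_abs]
            exact norm_le_pi_norm x j
        _ = (m : ℝ) * ‖x‖ ^ q := by simp [mul_comm]
    calc (∑ j, |x j| ^ q) ^ (1/q) ≤ ((m : ℝ) * ‖x‖ ^ q) ^ (1/q) :=
          Real.rpow_le_rpow hS0 h1 (by positivity)
      _ = (m:ℝ) ^ (1/q) * ‖x‖ := by
          rw [Real.mul_rpow (Nat.cast_nonneg m) (Real.rpow_nonneg (norm_nonneg _) _),
            one_div, Real.rpow_rpow_inv (norm_nonneg _) hq0.ne']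

/-- There is a universal constant `c > 0` with the following property.
Let `X` be an `n`-point metric space (`n ≥ 3`) and `K > 0` be such that every embedding
of `X` into `ℓ_q^m` (any `q ∈ [2, ∞)`, any `m`) with distortion `D` satisfies
`D ≥ K log n / q`.  Then every embedding of `X` into `ℓ_∞^d` (with the sup norm on
`ℝ^d`, `d ≥ 2`) with distortion `α ≥ 1` satisfies `α ≥ c K log n / log d`. -/
theorem stmt_13 :
    ∃ c : ℝ, 0 < c ∧
      ∀ (X : Type) (_ : MetricSpace X) (_ : Fintype X), 3 ≤ Fintype.card X →
      ∀ K : ℝ, 0 < K →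
      (∀ q : ℝ, 2 ≤ q → ∀ (m : ℕ) (g : X → (Fin m → ℝ)) (s D : ℝ), 0 < s →
        (∀ u v : X,
          s * dist u v ≤ (∑ j, |g u j - g v j| ^ q) ^ (1 / q) ∧
          (∑ j, |g u j - g v j| ^ q) ^ (1 / q) ≤ D * s * dist u v) →
        K * Real.log (Fintype.card X) / q ≤ D) →
      ∀ d : ℕ, 2 ≤ d → ∀ α : ℝ, 1 ≤ α →
      ∀ (f : X → (Fin d → ℝ)) (s : ℝ), 0 < s →
        (∀ u v : X, s * dist u v ≤ ‖f u - f v‖ ∧ ‖f u - f v‖ ≤ α * s * dist u v) →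
        c * K * Real.log (Fintype.card X) / Real.log d ≤ α := by
  refine ⟨1/10, by norm_num, ?_⟩
  intro X _ _ hn K hK hyp d hd α hα f s hs hf
  have hd0 : (0:ℝ) < d := by positivity
  have hd2 : (2:ℝ) ≤ (d:ℝ) := by exact_mod_cast hd
  have hld : 0 < Real.log d := Real.log_pos (by linarith)
  set q : ℝ := max 2 (Real.log d) with hqdef
  have hq2 : (2:ℝ) ≤ q := le_max_left _ _
  have hq1 : (1:ℝ) ≤ q := by linarith
  have hq0 : (0:ℝ) < q := by linarith
  have hα0 : (0:ℝ) ≤ α := by linarith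
  -- apply the hypothesis with g = f, D = d^{1/q} * α
  have hD : K * Real.log (Fintype.card X) / q ≤ (d:ℝ) ^ (1/q) * α := by
    apply hyp q hq2 d f s ((d:ℝ) ^ (1/q) * α) hs
    intro u v
    have hx := lq_bound_aux d (f u - f v) q hq1
    have hxe : ∀ j, (f u - f v) j = f u j - f v j := fun j => rfl
    simp only [hxe] at hx
    obtain ⟨h1, h2⟩ := hf u v
    constructor
    · exact le_trans h1 hx.1
    · calc (∑ j, |f u j - f v j| ^ q) ^ (1/q) ≤ (d:ℝ) ^ (1/q) * ‖f u - f v‖ := hx.2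
        _ ≤ (d:ℝ) ^ (1/q) * (α * s * dist u v) := by
            apply mul_le_mul_of_nonneg_left h2 (Real.rpow_nonneg hd0.le _)
        _ = (d:ℝ) ^ (1/q) * α * s * dist u v := by ring
  set L : ℝ := Real.log (Fintype.card X) with hLdef
  have hL : 0 < L := Real.log_pos (by
    have : (3:ℝ) ≤ (Fintype.card X : ℝ) := by exact_mod_cast hn
    linarith)
  rw [div_le_iff₀ hld]
  rcases le_or_gt 2 (Real.log d) with hcase | hcase
  · -- q = log d, d^{1/q} = e
    have hqe : q = Real.log d := max_eq_right hcase
    have hde : (d:ℝ) ^ (1/q) = Real.exp 1 := by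
      rw [Real.rpow_def_of_pos hd0, ← Real.exp_log hd0]
      rw [Real.exp_log hd0, hqe, mul_one_div, div_self hld.ne']
    rw [hde, hqe, div_le_iff₀ hld] at hD
    have he : Real.exp 1 < 2.7182818286 := Real.exp_one_lt_d9
    have h1 : (0:ℝ) ≤ α * Real.log d := mul_nonneg hα0 hld.le
    nlinarith [mul_le_mul_of_nonneg_right he.le h1]
  · -- q = 2, d < e^2 < 9
    have hqe : q = 2 := max_eq_left hcase.le
    have hd9 : (d:ℝ) ≤ 9 := by
      have h2 : (d:ℝ) < Real.exp 2 := by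
        calc (d:ℝ) = Real.exp (Real.log d) := (Real.exp_log hd0).symm
          _ < Real.exp 2 := Real.exp_lt_exp.mpr hcase
      have he : Real.exp 2 < 9 := by
        have h1 : Real.exp 1 < 2.7182818286 := Real.exp_one_lt_d9
        have : Real.exp 2 = Real.exp 1 * Real.exp 1 := by
          rw [← Real.exp_add]; norm_num
        nlinarith [Real.exp_pos 1]
      linarith
    have hsq : (d:ℝ) ^ ((1:ℝ)/2) ≤ 3 := by
      rw [← Real.sqrt_eq_rpow]
      calc Real.sqrt d ≤ Real.sqrt 9 := Real.sqrt_le_sqrt hd9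
        _ = 3 := by
            rw [show (9:ℝ) = 3^2 by norm_num, Real.sqrt_sq (by norm_num)]
    rw [hqe] at hD
    have hKL : K * L ≤ 6 * α := by
      have h3 : (d:ℝ) ^ ((1:ℝ)/2) * α ≤ 3 * α :=
        mul_le_mul_of_nonneg_right hsq hα0
      have : K * L / 2 ≤ 3 * α := le_trans hD h3
      linarith
    have hlog2 : (0.6931471803:ℝ) < Real.log 2 := Real.log_two_gt_d9
    have hld2 : Real.log 2 ≤ Real.log d := Real.log_le_log (by norm_num) hd2
    nlinarith [mul_le_mul_of_nonneg_left (le_trans hlog2.le hld2) hα0]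
end

section
/- There is a universal constant C > 0 with the following property. Let (X, d) be a finite metric space and δ ∈ (0, 1] be such that for every ρ > 0 there exists a finitely supported probability measure μ on partitions of X satisfying: (1) for every partition P in the support of μ and every block C ∈ P, diam(C) ≤ ρ; and (2) for every x ∈ X, E_{P ∼ μ}[ d(x, X ∖ C_P(x)) ] ≥ δρ, where C_P(x) is the block of P containing x and d(x, ∅) is interpreted as ρ. Then for every 0 < ε < 1 there exist a Hilbert space H and a map Φ : X → H such that for all x, y ∈ X, d(x,y)^{1−ε} ≤ ‖Φ(x) − Φ(y)‖ ≤ (C/(δ√ε))·d(x,y)^{1−ε}; i.e., the (1−ε)-snowflake (X, d^{1−ε}) embeds into Hilbert space with distortion at most C/(δ·√ε). -/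
/-!
Assouad's construction at the scales `ρₜ = Λ^t`, where `Λ^(2 - 2ε) = 2`. At each scale the
padded decomposition gives a map `Fₜ` into a Euclidean space: for every partition, a coordinate
for the block of `x` carrying `√w · min (2ρₜ) d(x, X ∖ C(x))`, and one more coordinate naming the
component of `x` in the graph joining points at distance `≤ ρₜ`. Then
`‖Fₜ x - Fₜ y‖ ≤ 2 min(d(x,y), 2ρₜ)`, and `‖Fₜ x - Fₜ y‖ ≥ δρₜ` once `d(x,y) > ρₜ`: if `x` and `y`
lie in one component, a boundary edge of a path from `x` to `y` shows that the truncation at `2ρₜ`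
does not touch the padding of `x`, and Jensen's inequality applies; otherwise the component
coordinate separates them. Concatenating the maps `ρₜ^(-ε) Fₜ` over finitely many scales, the
scales below `d(x,y)` form a geometric series of ratio `2` and those above it one of ratio
`Λ^(-2ε) = 2^(-ε/(1-ε))`, which costs the factor `1/ε`; the scale with `ρₜ < d(x,y) ≤ Λρₜ` alone
gives the lower bound.
-/

open scoped Classical

noncomputable section

theorem sum_zpow_le_of_lt_one {q : ℝ} (hq0 : 0 < q) (hq1 : q < 1) {T : Finset ℤ} {m : ℤ}
    (hT : ∀ t ∈ T, m ≤ t) : ∑ t ∈ T, q ^ t ≤ q ^ m / (1 - q) := by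
  obtain ⟨n, hn⟩ := Finset.exists_nat_subset_range (T.image fun t => (t - m).toNat)
  have hinj : Set.InjOn (fun t => (t - m).toNat) T := fun s hs t ht hst => by
    have := hT s hs; have := hT t ht; simp only at hst; omega
  calc ∑ t ∈ T, q ^ t = q ^ m * ∑ k ∈ T.image (fun t => (t - m).toNat), q ^ k := by
        rw [Finset.sum_image hinj, Finset.mul_sum]
        refine Finset.sum_congr rfl fun t ht => ?_
        rw [← zpow_natCast, Int.toNat_of_nonneg (by linarith [hT t ht]), ← zpow_add₀ hq0.ne']
        ring_nf
    _ ≤ q ^ m * ∑ k ∈ Finset.range n, q ^ k := by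
        gcongr
    _ ≤ q ^ m / (1 - q) := by
        rw [← mul_one_div]
        gcongr
        simpa using geom_sum_Ico_le_of_lt_one (m := 0) (n := n) hq0.le hq1

theorem sum_zpow_le_of_one_lt {r : ℝ} (hr : 1 < r) {T : Finset ℤ} {M : ℤ}
    (hT : ∀ t ∈ T, t ≤ M) : ∑ t ∈ T, r ^ t ≤ r ^ (M + 1) / (r - 1) := by
  have hr0 : 0 < r := by linarith
  have key := sum_zpow_le_of_lt_one (inv_pos.2 hr0) (inv_lt_one_of_one_lt₀ hr)
    (T := T.map (Equiv.neg ℤ).toEmbedding) (m := -M) (by simpa using fun t ht => neg_le.1 (hT _ ht))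
  rw [Finset.sum_map] at key
  convert key using 1
  · simp [inv_zpow']
  · rw [inv_zpow', neg_neg, zpow_add_one₀ hr0.ne']
    field_simp

theorem zpow_rpow_comm {a : ℝ} (ha : 0 ≤ a) (t : ℤ) (q : ℝ) : (a ^ t) ^ q = (a ^ q) ^ t := by
  rw [← Real.rpow_intCast_mul ha, mul_comm, Real.rpow_mul_intCast ha]

theorem rpow_one_sub_sq {d : ℝ} (hd : 0 ≤ d) (ε : ℝ) : (d ^ (1 - ε)) ^ 2 = d ^ (2 - 2 * ε) := by
  rw [← Real.rpow_natCast, ← Real.rpow_mul hd]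
  ring_nf

theorem sum_sq_sub_single {β : Type*} [Fintype β] [DecidableEq β] (i j : β) (a b : ℝ) :
    ∑ k, (Pi.single i a k - Pi.single j b k) ^ 2 =
      if i = j then (a - b) ^ 2 else a ^ 2 + b ^ 2 := by
  split_ifs with h
  · subst h
    simp only [← Pi.sub_apply, ← Pi.single_sub]
    simp [Pi.single_apply]
  · simp [Pi.single_apply, sub_sq, Finset.sum_add_distrib, Finset.sum_sub_distrib, ite_pow,
      Ne.symm h]

theorem dist_toLp_sigma_sq {σ : Type*} {J : σ → Type*} [∀ s, Fintype (J s)] (T : Finset σ)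
    (a : σ → ℝ) (u v : ∀ s, J s → ℝ) :
    dist (WithLp.toLp 2 fun p : (Σ s : T, J s) => a p.1 * u p.1 p.2)
        (WithLp.toLp 2 fun p : (Σ s : T, J s) => a p.1 * v p.1 p.2) ^ 2 =
      ∑ s ∈ T, a s ^ 2 * ∑ j, (u s j - v s j) ^ 2 := by
  rw [EuclideanSpace.dist_sq_eq, Fintype.sum_sigma, ← Finset.sum_coe_sort T]
  refine Finset.sum_congr rfl fun s _ => ?_
  rw [Finset.mul_sum]
  refine Finset.sum_congr rfl fun j _ => ?_
  simp only [Real.dist_eq, sq_abs]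
  ring

section Padding

variable {X : Type*} [MetricSpace X]

def padDist (ρ : ℝ) (B : X → Set X) (x : X) : ℝ :=
  if (B x)ᶜ = ∅ then ρ else Metric.infDist x (B x)ᶜ

def truncPad (ρ : ℝ) (B : X → Set X) (x : X) : ℝ := min (2 * ρ) (padDist ρ B x)

section truncPad

variable {ρ : ℝ} {B : X → Set X} {x y : X}

theorem truncPad_nonneg (hρ : 0 ≤ ρ) : 0 ≤ truncPad ρ B x := by
  unfold truncPad padDist
  split_ifs
  · positivity
  · exact le_min (by positivity) Metric.infDist_nonneg

theorem truncPad_le : truncPad ρ B x ≤ 2 * ρ := min_le_left _ _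

theorem abs_truncPad_sub_le (h : B y = B x) : |truncPad ρ B x - truncPad ρ B y| ≤ dist x y := by
  unfold truncPad padDist
  rw [h]
  split_ifs
  · simp
  · refine (abs_min_sub_min_le_max _ _ _ _).trans ?_
    simpa [Real.dist_eq] using (Metric.lipschitz_infDist_pt (B x)ᶜ).dist_le_mul x y

theorem truncPad_le_dist (hy : y ∉ B x) : truncPad ρ B x ≤ dist x y := by
  have hne : (B x)ᶜ ≠ ∅ := Set.nonempty_iff_ne_empty.mp ⟨y, hy⟩
  unfold truncPad padDist
  rw [if_neg hne]
  exact (min_le_right _ _).trans (Metric.infDist_le_dist_of_mem hy)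

theorem ite_truncPad_sq_le (hρ : 0 ≤ ρ) (hmem : ∀ x, x ∈ B x)
    (hB : ∀ x y, y ∈ B x → B y = B x) (x y : X) :
    (if y ∈ B x then (truncPad ρ B x - truncPad ρ B y) ^ 2
      else truncPad ρ B x ^ 2 + truncPad ρ B y ^ 2) ≤ 2 * min (dist x y) (2 * ρ) ^ 2 := by
  set m := min (dist x y) (2 * ρ)
  split_ifs with h
  · have hxy : |truncPad ρ B x - truncPad ρ B y| ≤ m :=
      le_min (abs_truncPad_sub_le (hB x y h)) (abs_sub_le_of_nonneg_of_le
        (truncPad_nonneg hρ) truncPad_le (truncPad_nonneg hρ) truncPad_le)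
    calc (truncPad ρ B x - truncPad ρ B y) ^ 2 = |truncPad ρ B x - truncPad ρ B y| ^ 2 :=
          (sq_abs _).symm
      _ ≤ m ^ 2 := pow_le_pow_left₀ (abs_nonneg _) hxy 2
      _ ≤ 2 * m ^ 2 := by linarith [sq_nonneg m]
  · have hx : x ∉ B y := fun hx => h (hB y x hx ▸ hmem y)
    have hx' : truncPad ρ B x ≤ m := le_min (truncPad_le_dist h) truncPad_le
    have hy' : truncPad ρ B y ≤ m := le_min (dist_comm x y ▸ truncPad_le_dist hx) truncPad_le
    calc truncPad ρ B x ^ 2 + truncPad ρ B y ^ 2 ≤ m ^ 2 + m ^ 2 :=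
          add_le_add (pow_le_pow_left₀ (truncPad_nonneg hρ) hx' 2)
            (pow_le_pow_left₀ (truncPad_nonneg hρ) hy' 2)
      _ = 2 * m ^ 2 := by ring

end truncPad

def scaleGraph (ρ : ℝ) : SimpleGraph X where
  Adj a b := a ≠ b ∧ dist a b ≤ ρ
  symm := ⟨fun a b h => ⟨h.1.symm, dist_comm a b ▸ h.2⟩⟩
  loopless := ⟨fun _ h => h.1 rfl⟩

section scaleGraph

variable {ρ : ℝ} {x y : X}

theorem scaleGraph_reachable_of_dist_le (h : dist x y ≤ ρ) : (scaleGraph ρ).Reachable x y := by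
  rcases eq_or_ne x y with rfl | hne
  · rfl
  · exact SimpleGraph.Adj.reachable ⟨hne, h⟩

theorem lt_dist_of_not_reachable (h : ¬(scaleGraph ρ).Reachable x y) : ρ < dist x y :=
  lt_of_not_ge fun h' => h (scaleGraph_reachable_of_dist_le h')

theorem padDist_le_of_reachable {B : X → Set X} (hx : x ∈ B x) (hB : Bornology.IsBounded (B x))
    (hdiam : Metric.diam (B x) ≤ ρ) (hxy : (scaleGraph ρ).Reachable x y) (hy : y ∉ B x) :
    padDist ρ B x ≤ 2 * ρ := by
  obtain ⟨p⟩ := hxy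
  obtain ⟨d, -, hd₁, hd₂⟩ := p.exists_boundary_dart (B x) hx hy
  have hne : (B x)ᶜ ≠ ∅ := Set.nonempty_iff_ne_empty.mp ⟨y, hy⟩
  rw [padDist, if_neg hne]
  calc Metric.infDist x (B x)ᶜ ≤ dist x d.snd := Metric.infDist_le_dist_of_mem hd₂
    _ ≤ dist x d.fst + dist d.fst d.snd := dist_triangle _ _ _
    _ ≤ ρ + ρ := add_le_add ((Metric.dist_le_diam_of_mem hB hx hd₁).trans hdiam) d.adj.2
    _ = 2 * ρ := by ring

end scaleGraph

structure PaddedDecomposition (X : Type*) [MetricSpace X] (δ ρ : ℝ) where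
  ι : Type
  [instFintype : Fintype ι]
  wt : ι → ℝ
  block : ι → X → Set X
  wt_nonneg : ∀ i, 0 ≤ wt i
  sum_wt : ∑ i, wt i = 1
  mem_block : ∀ i x, x ∈ block i x
  block_eq_of_mem : ∀ i x y, y ∈ block i x → block i y = block i x
  diam_block_le : ∀ i x, Metric.diam (block i x) ≤ ρ
  le_sum_padDist : ∀ x, δ * ρ ≤ ∑ i, wt i * padDist ρ (block i) x

attribute [instance] PaddedDecomposition.instFintype

namespace PaddedDecomposition

variable {δ ρ : ℝ} (D : PaddedDecomposition X δ ρ)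

theorem block_eq_block_iff {i : D.ι} {x y : X} : D.block i x = D.block i y ↔ y ∈ D.block i x :=
  ⟨fun h => h ▸ D.mem_block i y, fun h => (D.block_eq_of_mem i x y h).symm⟩

abbrev Index : Type _ := (D.ι × Set X) ⊕ (scaleGraph (X := X) ρ).ConnectedComponent

variable [Fintype X]

def feature (x : X) : D.Index → ℝ :=
  Sum.elim
    (fun p => √(D.wt p.1) *
      (Pi.single (D.block p.1 x) (truncPad ρ (D.block p.1) x) : Set X → ℝ) p.2)
    (Pi.single ((scaleGraph ρ).connectedComponentMk x) ρ)

theorem sum_sq_sub_feature (x y : X) :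
    ∑ j, (D.feature x j - D.feature y j) ^ 2 =
      ∑ i, D.wt i * (if y ∈ D.block i x
          then (truncPad ρ (D.block i) x - truncPad ρ (D.block i) y) ^ 2
          else truncPad ρ (D.block i) x ^ 2 + truncPad ρ (D.block i) y ^ 2) +
        if (scaleGraph ρ).Reachable x y then 0 else 2 * ρ ^ 2 := by
  simp only [Fintype.sum_sum_type, Fintype.sum_prod_type, feature, Sum.elim_inl, Sum.elim_inr,
    ← mul_sub, mul_pow, ← Finset.mul_sum, sum_sq_sub_single, Real.sq_sqrt (D.wt_nonneg _),
    D.block_eq_block_iff, SimpleGraph.ConnectedComponent.eq]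
  congr 1
  split_ifs <;> ring

theorem sum_sq_sub_feature_le (hρ : 0 ≤ ρ) (x y : X) :
    ∑ j, (D.feature x j - D.feature y j) ^ 2 ≤ 4 * min (dist x y) (2 * ρ) ^ 2 := by
  rw [sum_sq_sub_feature]
  have hblocks : ∑ i, D.wt i * (if y ∈ D.block i x
      then (truncPad ρ (D.block i) x - truncPad ρ (D.block i) y) ^ 2
      else truncPad ρ (D.block i) x ^ 2 + truncPad ρ (D.block i) y ^ 2)
        ≤ 2 * min (dist x y) (2 * ρ) ^ 2 := by
    calc _ ≤ ∑ i, D.wt i * (2 * min (dist x y) (2 * ρ) ^ 2) := by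
          gcongr with i
          · exact D.wt_nonneg i
          · exact ite_truncPad_sq_le hρ (D.mem_block i) (D.block_eq_of_mem i) x y
      _ = 2 * min (dist x y) (2 * ρ) ^ 2 := by rw [← Finset.sum_mul, D.sum_wt, one_mul]
  have hcomponents : (if (scaleGraph ρ).Reachable x y then 0 else 2 * ρ ^ 2)
      ≤ 2 * min (dist x y) (2 * ρ) ^ 2 := by
    split_ifs with h
    · positivity
    · have : ρ ≤ min (dist x y) (2 * ρ) := le_min (lt_dist_of_not_reachable h).le (by linarith)
      nlinarith
  linarith

theorem sq_le_sum_sq_sub_feature (hρ : 0 < ρ) (hδ₀ : 0 ≤ δ) (hδ₁ : δ ≤ 1) {x y : X}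
    (hxy : ρ < dist x y) : (δ * ρ) ^ 2 ≤ ∑ j, (D.feature x j - D.feature y j) ^ 2 := by
  have hsep : ∀ i, y ∉ D.block i x := fun i hy => hxy.not_ge <|
    (Metric.dist_le_diam_of_mem (Set.toFinite _).isBounded (D.mem_block i x) hy).trans
      (D.diam_block_le i x)
  rw [sum_sq_sub_feature]
  simp only [hsep, if_false]
  by_cases hreach : (scaleGraph ρ).Reachable x y
  · have hpad : ∀ i, truncPad ρ (D.block i) x = padDist ρ (D.block i) x := fun i =>
      min_eq_right <| padDist_le_of_reachable (D.mem_block i x) (Set.toFinite _).isBounded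
        (D.diam_block_le i x) hreach (hsep i)
    calc (δ * ρ) ^ 2 ≤ (∑ i, D.wt i * truncPad ρ (D.block i) x) ^ 2 := by
          simp only [hpad]
          exact pow_le_pow_left₀ (by positivity) (D.le_sum_padDist x) 2
      _ ≤ ∑ i, D.wt i * truncPad ρ (D.block i) x ^ 2 := by
          simpa using (even_two.convexOn_pow (𝕜 := ℝ)).map_sum_le
            (fun i _ => D.wt_nonneg i) D.sum_wt (fun i _ => Set.mem_univ (truncPad ρ (D.block i) x))
      _ ≤ _ := by
          rw [if_pos hreach, add_zero]
          gcongr with i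
          · exact D.wt_nonneg i
          · exact le_add_of_nonneg_right (sq_nonneg _)
  · rw [if_neg hreach]
    have : 0 ≤ ∑ i, D.wt i * (truncPad ρ (D.block i) x ^ 2 + truncPad ρ (D.block i) y ^ 2) :=
      Finset.sum_nonneg fun i _ => mul_nonneg (D.wt_nonneg i) (by positivity)
    have : δ ^ 2 ≤ 1 := pow_le_one₀ hδ₀ hδ₁
    nlinarith

end PaddedDecomposition

end Padding

def snowflakeBase (ε : ℝ) : ℝ := 2 ^ (1 / (2 * (1 - ε)))

section snowflakeBase

variable {ε : ℝ}

theorem one_lt_snowflakeBase (hε : ε < 1) : 1 < snowflakeBase ε :=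
  Real.one_lt_rpow one_lt_two (one_div_pos.2 (by linarith))

theorem snowflakeBase_pos : 0 < snowflakeBase ε := by unfold snowflakeBase; positivity

theorem snowflakeBase_rpow_two_sub (hε : ε < 1) : snowflakeBase ε ^ (2 - 2 * ε) = 2 := by
  rw [snowflakeBase, ← Real.rpow_mul zero_le_two]
  have : 1 - ε ≠ 0 := by linarith
  field_simp
  norm_num

theorem one_add_half_le_snowflakeBase_rpow (hε₀ : 0 < ε) (hε₁ : ε < 1) :
    1 + ε / 2 ≤ snowflakeBase ε ^ (2 * ε) := by
  have h1 : 0 < 1 - ε := by linarith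
  rw [snowflakeBase, ← Real.rpow_mul zero_le_two, Real.rpow_def_of_pos two_pos]
  have hx : ε ≤ 1 / (2 * (1 - ε)) * (2 * ε) := by
    rw [div_mul_eq_mul_div, one_mul, le_div_iff₀ (by positivity)]; nlinarith
  have hlog : 1 / 2 < Real.log 2 := by linarith [Real.log_two_gt_d9]
  nlinarith [Real.add_one_le_exp (Real.log 2 * (1 / (2 * (1 - ε)) * (2 * ε)))]

theorem snowflakeBase_zpow_rpow_two_sub (hε : ε < 1) (t : ℤ) :
    (snowflakeBase ε ^ t) ^ (2 - 2 * ε) = 2 ^ t := by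
  rw [zpow_rpow_comm snowflakeBase_pos.le, snowflakeBase_rpow_two_sub hε]

theorem snowflakeBase_zpow_rpow_mul_sq (hε : ε < 1) (t : ℤ) :
    (snowflakeBase ε ^ t) ^ (-(2 * ε)) * (snowflakeBase ε ^ t) ^ 2 = 2 ^ t := by
  have h : (snowflakeBase ε ^ t) ≠ 0 := (zpow_pos snowflakeBase_pos t).ne'
  rw [← snowflakeBase_zpow_rpow_two_sub hε t, ← Real.rpow_add_natCast h]
  ring_nf

theorem sum_small_scales_le (hε : ε < 1) {T : Finset ℤ} {M : ℤ} (hT : ∀ t ∈ T, t ≤ M) :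
    ∑ t ∈ T, (snowflakeBase ε ^ t) ^ (-(2 * ε)) * (2 * snowflakeBase ε ^ t) ^ 2 ≤
      8 * (snowflakeBase ε ^ M) ^ (2 - 2 * ε) := by
  calc _ = 4 * ∑ t ∈ T, (2 : ℝ) ^ t := by
        rw [Finset.mul_sum]
        refine Finset.sum_congr rfl fun t _ => ?_
        rw [← snowflakeBase_zpow_rpow_mul_sq hε t]
        ring
    _ ≤ 4 * (2 ^ (M + 1) / (2 - 1)) := by gcongr; exact sum_zpow_le_of_one_lt one_lt_two hT
    _ = 8 * (snowflakeBase ε ^ M) ^ (2 - 2 * ε) := by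
        rw [snowflakeBase_zpow_rpow_two_sub hε, zpow_add_one₀ two_ne_zero]
        ring

theorem sum_large_scales_le (hε₀ : 0 < ε) (hε₁ : ε < 1) {T : Finset ℤ} {M : ℤ}
    (hT : ∀ t ∈ T, M < t) :
    ∑ t ∈ T, (snowflakeBase ε ^ t) ^ (-(2 * ε)) ≤
      3 / ε * (snowflakeBase ε ^ (M + 1)) ^ (-(2 * ε)) := by
  set q := snowflakeBase ε ^ (-(2 * ε))
  have hs := one_add_half_le_snowflakeBase_rpow hε₀ hε₁
  have hq : q = (snowflakeBase ε ^ (2 * ε))⁻¹ := Real.rpow_neg snowflakeBase_pos.le _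
  have hq0 : 0 < q := Real.rpow_pos_of_pos snowflakeBase_pos _
  have hq1 : q ≤ 1 / (1 + ε / 2) := by
    rw [hq, ← one_div]; gcongr
  have hq1' : q < 1 := hq1.trans_lt (by rw [div_lt_one (by positivity)]; linarith)
  have h1q : 1 / (1 - q) ≤ 3 / ε := by
    rw [div_le_div_iff₀ (by linarith) hε₀]
    rw [le_div_iff₀ (by positivity)] at hq1
    nlinarith
  calc _ = ∑ t ∈ T, q ^ t := by
        refine Finset.sum_congr rfl fun t _ => zpow_rpow_comm snowflakeBase_pos.le t _
    _ ≤ q ^ (M + 1) / (1 - q) := sum_zpow_le_of_lt_one hq0 hq1' fun t ht => hT t ht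
    _ = 1 / (1 - q) * q ^ (M + 1) := by ring
    _ ≤ 3 / ε * q ^ (M + 1) := by gcongr
    _ = _ := by rw [zpow_rpow_comm snowflakeBase_pos.le]

theorem sum_scales_le (hε₀ : 0 < ε) (hε₁ : ε < 1) {d : ℝ} (hd : 0 < d) (T : Finset ℤ) :
    ∑ t ∈ T, (snowflakeBase ε ^ t) ^ (-(2 * ε)) * min d (2 * snowflakeBase ε ^ t) ^ 2 ≤
      11 / ε * d ^ (2 - 2 * ε) := by
  obtain ⟨M, hM₁, hM₂⟩ := exists_mem_Ico_zpow hd (one_lt_snowflakeBase hε₁)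
  have hΛ : 0 < snowflakeBase ε := snowflakeBase_pos
  rw [← Finset.sum_filter_add_sum_filter_not T (· ≤ M)]
  have hsmall : ∑ t ∈ T with t ≤ M,
      (snowflakeBase ε ^ t) ^ (-(2 * ε)) * min d (2 * snowflakeBase ε ^ t) ^ 2 ≤
        8 * d ^ (2 - 2 * ε) :=
    calc _ ≤ ∑ t ∈ T with t ≤ M,
          (snowflakeBase ε ^ t) ^ (-(2 * ε)) * (2 * snowflakeBase ε ^ t) ^ 2 := by
          gcongr with t
          exact min_le_right _ _
      _ ≤ 8 * (snowflakeBase ε ^ M) ^ (2 - 2 * ε) :=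
          sum_small_scales_le hε₁ fun t ht => (Finset.mem_filter.1 ht).2
      _ ≤ 8 * d ^ (2 - 2 * ε) := by
          gcongr
          linarith
  have hlarge : ∑ t ∈ T with ¬t ≤ M,
      (snowflakeBase ε ^ t) ^ (-(2 * ε)) * min d (2 * snowflakeBase ε ^ t) ^ 2 ≤
        3 / ε * d ^ (2 - 2 * ε) :=
    calc _ ≤ ∑ t ∈ T with ¬t ≤ M, (snowflakeBase ε ^ t) ^ (-(2 * ε)) * d ^ 2 := by
          gcongr with t
          exact min_le_left _ _
      _ = (∑ t ∈ T with ¬t ≤ M, (snowflakeBase ε ^ t) ^ (-(2 * ε))) * d ^ 2 := by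
          rw [Finset.sum_mul]
      _ ≤ 3 / ε * (snowflakeBase ε ^ (M + 1)) ^ (-(2 * ε)) * d ^ 2 := by
          gcongr
          exact sum_large_scales_le hε₀ hε₁ fun t ht => not_le.1 (Finset.mem_filter.1 ht).2
      _ ≤ 3 / ε * d ^ (-(2 * ε)) * d ^ 2 := by
          have := Real.rpow_le_rpow_of_nonpos hd hM₂.le (z := -(2 * ε)) (by linarith)
          gcongr _ * ?_ * _
      _ = 3 / ε * d ^ (2 - 2 * ε) := by
          rw [mul_assoc, ← Real.rpow_add_natCast hd.ne']
          ring_nf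
  have h8 : 8 * d ^ (2 - 2 * ε) ≤ 8 / ε * d ^ (2 - 2 * ε) := by
    gcongr
    rw [le_div_iff₀ hε₀]
    linarith
  have h11 : 11 / ε * d ^ (2 - 2 * ε) = 8 / ε * d ^ (2 - 2 * ε) + 3 / ε * d ^ (2 - 2 * ε) := by
    ring
  linarith

end snowflakeBase

section snowflakeMap

variable {X : Type*} [MetricSpace X] [Fintype X] {δ ε : ℝ}

def snowflakeMap (D : ∀ t : ℤ, PaddedDecomposition X δ (snowflakeBase ε ^ t)) (T : Finset ℤ)
    (x : X) : EuclideanSpace ℝ (Σ t : T, (D t).Index) :=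
  WithLp.toLp 2 fun p => (snowflakeBase ε ^ (p.1 : ℤ)) ^ (-ε) * (D p.1).feature x p.2

variable (D : ∀ t : ℤ, PaddedDecomposition X δ (snowflakeBase ε ^ t)) (T : Finset ℤ)

theorem dist_snowflakeMap_sq (x y : X) :
    dist (snowflakeMap D T x) (snowflakeMap D T y) ^ 2 =
      ∑ t ∈ T, (snowflakeBase ε ^ t) ^ (-(2 * ε)) *
        ∑ j, ((D t).feature x j - (D t).feature y j) ^ 2 := by
  refine (dist_toLp_sigma_sq T (fun t => (snowflakeBase ε ^ t) ^ (-ε)) (fun t => (D t).feature x)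
    (fun t => (D t).feature y)).trans ?_
  refine Finset.sum_congr rfl fun t _ => ?_
  rw [← Real.rpow_natCast, ← Real.rpow_mul (zpow_pos snowflakeBase_pos t).le]
  ring_nf

theorem dist_snowflakeMap_sq_le (hε₀ : 0 < ε) (hε₁ : ε < 1) {x y : X} (hxy : x ≠ y) :
    dist (snowflakeMap D T x) (snowflakeMap D T y) ^ 2 ≤ 44 / ε * dist x y ^ (2 - 2 * ε) :=
  calc _ = _ := dist_snowflakeMap_sq D T x y
    _ ≤ ∑ t ∈ T, (snowflakeBase ε ^ t) ^ (-(2 * ε)) *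
          (4 * min (dist x y) (2 * snowflakeBase ε ^ t) ^ 2) := by
        gcongr with t
        · exact Real.rpow_nonneg (zpow_pos snowflakeBase_pos t).le _
        · exact (D t).sum_sq_sub_feature_le (zpow_pos snowflakeBase_pos t).le x y
    _ = 4 * ∑ t ∈ T, (snowflakeBase ε ^ t) ^ (-(2 * ε)) *
          min (dist x y) (2 * snowflakeBase ε ^ t) ^ 2 := by
        rw [Finset.mul_sum]
        ring_nf
    _ ≤ 4 * (11 / ε * dist x y ^ (2 - 2 * ε)) := by
        gcongr
        exact sum_scales_le hε₀ hε₁ (dist_pos.2 hxy) T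
    _ = 44 / ε * dist x y ^ (2 - 2 * ε) := by ring

theorem le_dist_snowflakeMap_sq (hδ₀ : 0 ≤ δ) (hδ₁ : δ ≤ 1) (hε : ε < 1) {x y : X} {τ : ℤ}
    (hτ : τ ∈ T) (h₁ : snowflakeBase ε ^ τ < dist x y) (h₂ : dist x y ≤ snowflakeBase ε ^ (τ + 1)) :
    δ ^ 2 / 2 * dist x y ^ (2 - 2 * ε) ≤ dist (snowflakeMap D T x) (snowflakeMap D T y) ^ 2 := by
  have hρ : 0 < snowflakeBase ε ^ τ := zpow_pos snowflakeBase_pos τ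
  calc δ ^ 2 / 2 * dist x y ^ (2 - 2 * ε)
      ≤ δ ^ 2 / 2 * (snowflakeBase ε ^ (τ + 1)) ^ (2 - 2 * ε) := by
        gcongr
        linarith
    _ = (snowflakeBase ε ^ τ) ^ (-(2 * ε)) * (δ * snowflakeBase ε ^ τ) ^ 2 := by
        rw [snowflakeBase_zpow_rpow_two_sub hε, zpow_add_one₀ two_ne_zero,
          ← snowflakeBase_zpow_rpow_mul_sq hε τ]
        ring
    _ ≤ (snowflakeBase ε ^ τ) ^ (-(2 * ε)) *
          ∑ j, ((D τ).feature x j - (D τ).feature y j) ^ 2 := by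
        gcongr
        exact (D τ).sq_le_sum_sq_sub_feature hρ hδ₀ hδ₁ h₁
    _ ≤ _ := by
        rw [dist_snowflakeMap_sq]
        exact Finset.single_le_sum (f := fun t => (snowflakeBase ε ^ t) ^ (-(2 * ε)) *
          ∑ j, ((D t).feature x j - (D t).feature y j) ^ 2)
          (fun t _ => mul_nonneg (Real.rpow_nonneg (zpow_pos snowflakeBase_pos t).le _)
            (Finset.sum_nonneg fun _ _ => sq_nonneg _)) hτ

end snowflakeMap

theorem exists_snowflake_embedding {X : Type} [MetricSpace X] [Fintype X] {δ ε : ℝ}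
    (hδ₀ : 0 < δ) (hδ₁ : δ ≤ 1) (hε₀ : 0 < ε) (hε₁ : ε < 1)
    (D : ∀ t : ℤ, PaddedDecomposition X δ (snowflakeBase ε ^ t)) :
    ∃ (H : Type) (_ : NormedAddCommGroup H) (_ : InnerProductSpace ℝ H) (_ : CompleteSpace H)
      (Φ : X → H), ∀ x y : X,
        dist x y ^ (1 - ε) ≤ ‖Φ x - Φ y‖ ∧
        ‖Φ x - Φ y‖ ≤ (10 / (δ * Real.sqrt ε)) * dist x y ^ (1 - ε) := by
  choose! τ hτ using fun p : X × X => fun hp : p.1 ≠ p.2 =>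
    exists_mem_Ioc_zpow (dist_pos.2 hp) (one_lt_snowflakeBase hε₁)
  set T := Finset.univ.image τ
  refine ⟨_, inferInstance, inferInstance, inferInstance, fun x => (√2 / δ) • snowflakeMap D T x,
    fun x y => ?_⟩
  rcases eq_or_ne x y with rfl | hxy
  · simp [Real.zero_rpow (by linarith : 1 - ε ≠ 0)]
  have hlow := le_dist_snowflakeMap_sq D T hδ₀.le hδ₁ hε₁
    (Finset.mem_image_of_mem τ (Finset.mem_univ (x, y))) (hτ (x, y) hxy).1 (hτ (x, y) hxy).2
  have hup := dist_snowflakeMap_sq_le D T hε₀ hε₁ hxy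
  rw [← smul_sub, norm_smul, ← dist_eq_norm, Real.norm_of_nonneg (by positivity)]
  constructor
  · rw [← pow_le_pow_iff_left₀ (by positivity) (by positivity) two_ne_zero, mul_pow, div_pow,
      Real.sq_sqrt zero_le_two, rpow_one_sub_sq dist_nonneg]
    calc dist x y ^ (2 - 2 * ε) = 2 / δ ^ 2 * (δ ^ 2 / 2 * dist x y ^ (2 - 2 * ε)) := by
          field_simp
      _ ≤ _ := by gcongr
  · rw [← pow_le_pow_iff_left₀ (by positivity) (by positivity) two_ne_zero, mul_pow, div_pow,
      Real.sq_sqrt zero_le_two, mul_pow, div_pow, mul_pow, Real.sq_sqrt hε₀.le,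
      rpow_one_sub_sq dist_nonneg]
    calc 2 / δ ^ 2 * dist (snowflakeMap D T x) (snowflakeMap D T y) ^ 2
        ≤ 2 / δ ^ 2 * (44 / ε * dist x y ^ (2 - 2 * ε)) := by gcongr
      _ ≤ 10 ^ 2 / (δ ^ 2 * ε) * dist x y ^ (2 - 2 * ε) := by
          rw [← mul_assoc, div_mul_div_comm]
          gcongr
          norm_num

end

/-- (Snowflake embeddings of decomposable metrics.)  There is a
universal constant `C > 0` with the following property.  Let `(X, d)` be a finite metric
space and `δ ∈ (0,1]` be such that for every `ρ > 0` there is a finitely supported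
probability distribution (finitely many partitions `c i`, encoded by the map sending a
point to its block, with weights `wt i`) over partitions of `X` into blocks of diameter
at most `ρ` with `E[d(x, X ∖ C(x))] ≥ δρ` for every `x` (where `d(x, ∅) := ρ`).  Then for
every `0 < ε < 1` the `(1-ε)`-snowflake of `X` embeds into a Hilbert space with distortion
at most `C/(δ√ε)`: there is `Φ : X → H` with
`d(x,y)^{1-ε} ≤ ‖Φ x - Φ y‖ ≤ (C/(δ√ε)) d(x,y)^{1-ε}`. -/
theorem stmt_15 :
    ∃ C : ℝ, 0 < C ∧
      ∀ (X : Type) (_ : MetricSpace X) (_ : Fintype X) (δ : ℝ), 0 < δ → δ ≤ 1 →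
      (∀ ρ : ℝ, 0 < ρ →
        ∃ (ι : Type) (_ : Fintype ι) (wt : ι → ℝ) (c : ι → X → Set X),
          (∀ i, 0 ≤ wt i) ∧ (∑ i, wt i) = 1 ∧
          (∀ i x, x ∈ c i x) ∧
          (∀ i x y, y ∈ c i x → c i y = c i x) ∧
          (∀ i x, Metric.diam (c i x) ≤ ρ) ∧
          (∀ x : X,
            δ * ρ ≤ ∑ i, wt i * (if (c i x)ᶜ = ∅ then ρ else Metric.infDist x (c i x)ᶜ))) →
      ∀ ε : ℝ, 0 < ε → ε < 1 →
      ∃ (H : Type) (_ : NormedAddCommGroup H) (_ : InnerProductSpace ℝ H)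
        (_ : CompleteSpace H) (Φ : X → H),
        ∀ x y : X,
          dist x y ^ (1 - ε) ≤ ‖Φ x - Φ y‖ ∧
          ‖Φ x - Φ y‖ ≤ (C / (δ * Real.sqrt ε)) * dist x y ^ (1 - ε) := by
  refine ⟨10, by norm_num, fun X _ _ δ hδ₀ hδ₁ hdec ε hε₀ hε₁ => ?_⟩
  choose ι _ wt c hwt hsum hmem hblock hdiam hpad using hdec
  exact exists_snowflake_embedding hδ₀ hδ₁ hε₀ hε₁ fun t =>
    have hρ := zpow_pos snowflakeBase_pos t
    ⟨ι _ hρ, wt _ hρ, c _ hρ, hwt _ hρ, hsum _ hρ, hmem _ hρ, hblock _ hρ, hdiam _ hρ, hpad _ hρ⟩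
end

section
/- Let (X, d) be a finite metric space, ρ > 0, δ ∈ (0, 1], and suppose there is a finitely supported probability measure μ on partitions of X such that: (1) every block C of every partition P in the support of μ has diam(C) ≤ ρ; and (2) for every x ∈ X, E_{P ∼ μ}[ d(x, X ∖ C_P(x)) ] ≥ δρ, where C_P(x) is the block of P containing x and d(x, ∅) is interpreted as ρ. Then there exist a Hilbert space H and a map φ : X → H such that for all x, y ∈ X: ‖φ(x) − φ(y)‖ ≤ 2·min{d(x,y), ρ}, and if d(x,y) > ρ then ‖φ(x) − φ(y)‖ ≥ δρ. -/
/-!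
For each partition `P`, send `x` to `√μ(P) · min (d(x, X ∖ P(x)), ρ)` placed on the coordinate
indexed by the block `P(x)`. Within a block this moves by at most the distance (distance to a
complement is 1-Lipschitz), and two points in different blocks each have depth at most their
distance; this gives the upper bound. Points more than `ρ` apart are separated by every partition,
so by Jensen their squared distance is at least the square of the expected truncated depth.

Truncating at `ρ` loses something only at points whose closed `ρ`-ball lies in a single block,
hence has diameter at most `ρ`. Among such points, being within `ρ` is an equivalence relation
whose classes are more than `ρ` apart, and tents of height `ρ / 2` over the classes (scaled by `√2`)
separate two far such points by `ρ ≥ δρ` while keeping the upper bound.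
-/

open scoped Classical

open Metric

namespace EuclideanSpace

variable {κ : Type*} [Fintype κ] [DecidableEq κ]

lemma norm_single_sub_single_sq (i j : κ) (a b : ℝ) :
    ‖single i a - single j b‖ ^ 2 = if i = j then (a - b) ^ 2 else a ^ 2 + b ^ 2 := by
  split_ifs with hij
  · rw [hij, ← PiLp.single_sub, PiLp.norm_single, Real.norm_eq_abs, sq_abs]
  · rw [norm_sub_sq_real, inner_single_left, PiLp.single_eq_of_ne _ hij, PiLp.norm_single,
      PiLp.norm_single, Real.norm_eq_abs, Real.norm_eq_abs, sq_abs, sq_abs]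
    simp

lemma exists_eq_single [Nonempty κ] (v : EuclideanSpace ℝ κ)
    (hv : ∀ i j, v i ≠ 0 → v j ≠ 0 → i = j) : ∃ i, v = single i (v i) := by
  by_cases h : ∃ i, v i ≠ 0
  · obtain ⟨i, hi⟩ := h
    refine ⟨i, PiLp.ext fun j => ?_⟩
    rcases eq_or_ne j i with rfl | hji
    · rw [PiLp.single_eq_same]
    · rw [PiLp.single_eq_of_ne _ hji]
      by_contra hj
      exact hji (hv j i hj hi)
  · push Not at h
    refine ⟨Classical.arbitrary κ, PiLp.ext fun j => ?_⟩
    simp [h]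

lemma norm_sub_sq_le_of_subsingleton_support (u v : EuclideanSpace ℝ κ) {m : ℝ}
    (hu : ∀ i j, u i ≠ 0 → u j ≠ 0 → i = j) (hv : ∀ i j, v i ≠ 0 → v j ≠ 0 → i = j)
    (hcoord : ∀ i, (u i - v i) ^ 2 ≤ m ^ 2)
    (hcross : ∀ i j, i ≠ j → u i ≠ 0 → v j ≠ 0 → u i ^ 2 + v j ^ 2 ≤ m ^ 2) :
    ‖u - v‖ ^ 2 ≤ m ^ 2 := by
  rcases isEmpty_or_nonempty κ with hκ | hκ
  · simpa [Subsingleton.elim u v] using sq_nonneg m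
  obtain ⟨i, hui⟩ := exists_eq_single u hu
  obtain ⟨j, hvj⟩ := exists_eq_single v hv
  rw [hui, hvj, norm_single_sub_single_sq]
  split_ifs with hij
  · subst hij
    exact hcoord i
  have huj : u j = 0 := by rw [hui, PiLp.single_eq_of_ne' _ hij]
  have hvi : v i = 0 := by rw [hvj, PiLp.single_eq_of_ne _ hij]
  by_cases hi : u i = 0
  · simpa [hi, huj] using hcoord j
  by_cases hj : v j = 0
  · simpa [hj, hvi] using hcoord i
  exact hcross i j hij hi hj

end EuclideanSpace

lemma sq_sub_le_min_sq {a b d ρ : ℝ} (hab : |a - b| ≤ d) (ha : 0 ≤ a) (hb : 0 ≤ b)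
    (haρ : a ≤ ρ) (hbρ : b ≤ ρ) : (a - b) ^ 2 ≤ min d ρ ^ 2 := by
  rw [← sq_abs]
  refine pow_le_pow_left₀ (abs_nonneg _) (le_min hab ?_) 2
  rw [abs_sub_le_iff]
  constructor <;> linarith

section Clusters

variable {X : Type*} [MetricSpace X] {ρ : ℝ} {s t : Set X} {x y : X}

noncomputable def clusterBump (ρ : ℝ) (s : Set X) (x : X) : ℝ := max (ρ / 2 - infDist x s) 0

lemma clusterBump_nonneg : 0 ≤ clusterBump ρ s x := le_max_right _ _

lemma clusterBump_le (hρ : 0 ≤ ρ) : clusterBump ρ s x ≤ ρ / 2 :=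
  max_le (by linarith [infDist_nonneg (x := x) (s := s)]) (by linarith)

lemma clusterBump_of_mem (hρ : 0 ≤ ρ) (hx : x ∈ s) : clusterBump ρ s x = ρ / 2 := by
  rw [clusterBump, infDist_zero_of_mem hx, sub_zero, max_eq_left (by linarith)]

lemma clusterBump_eq_of_pos (h : 0 < clusterBump ρ s x) :
    clusterBump ρ s x = ρ / 2 - infDist x s :=
  max_eq_left (by by_contra! h'; rw [clusterBump, max_eq_right h'.le] at h; exact h.false)

lemma abs_clusterBump_sub_le : |clusterBump ρ s x - clusterBump ρ s y| ≤ dist x y :=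
  calc |clusterBump ρ s x - clusterBump ρ s y|
      ≤ |(ρ / 2 - infDist x s) - (ρ / 2 - infDist y s)| := abs_max_sub_max_le_abs _ _ _
    _ = dist (infDist y s) (infDist x s) := by rw [Real.dist_eq]; ring_nf
    _ ≤ dist x y := by
      simpa [dist_comm] using (lipschitz_infDist_pt s).dist_le_mul x y

lemma clusterBump_add_clusterBump_le (hs : s.Nonempty) (ht : t.Nonempty)
    (hst : ∀ w ∈ s, ∀ w' ∈ t, ρ < dist w w') (hx : 0 < clusterBump ρ s x)
    (hy : 0 < clusterBump ρ t y) : clusterBump ρ s x + clusterBump ρ t y ≤ dist x y := by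
  rw [clusterBump_eq_of_pos hx, clusterBump_eq_of_pos hy]
  have key : ρ - dist x y - infDist x s ≤ infDist y t := by
    refine (le_infDist ht).2 fun w' hw' => ?_
    have : ρ - dist x y - dist y w' ≤ infDist x s := by
      refine (le_infDist hs).2 fun w hw => ?_
      linarith [hst w hw w' hw', dist_triangle4 w x y w', dist_comm w x]
    linarith
  linarith

variable {κ : Type*} {K : κ → Set X}

noncomputable def clusterMap (ρ : ℝ) (K : κ → Set X) (x : X) : EuclideanSpace ℝ κ :=
  WithLp.toLp 2 fun i => clusterBump ρ (K i) x

variable (hK : ∀ i, (K i).Nonempty)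
  (hKsep : Pairwise fun i j => ∀ w ∈ K i, ∀ w' ∈ K j, ρ < dist w w')
include hK hKsep

lemma clusterMap_support_subsingleton (x : X) (i j : κ) (hi : clusterMap ρ K x i ≠ 0)
    (hj : clusterMap ρ K x j ≠ 0) : i = j := by
  have hi' : 0 < clusterBump ρ (K i) x := clusterBump_nonneg.lt_of_ne' hi
  have hj' : 0 < clusterBump ρ (K j) x := clusterBump_nonneg.lt_of_ne' hj
  by_contra hij
  have := clusterBump_add_clusterBump_le (hK i) (hK j) (hKsep hij) hi' hj'
  rw [dist_self] at this
  linarith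

lemma norm_clusterMap_sub_sq_le [Fintype κ] [DecidableEq κ] (hρ : 0 ≤ ρ) (x y : X) :
    ‖clusterMap ρ K x - clusterMap ρ K y‖ ^ 2 ≤ min (dist x y) ρ ^ 2 := by
  refine EuclideanSpace.norm_sub_sq_le_of_subsingleton_support _ _
    (clusterMap_support_subsingleton hK hKsep x) (clusterMap_support_subsingleton hK hKsep y)
    (fun i => sq_sub_le_min_sq abs_clusterBump_sub_le clusterBump_nonneg clusterBump_nonneg
      ((clusterBump_le hρ).trans (by linarith)) ((clusterBump_le hρ).trans (by linarith)))
    fun i j hij hi hj => ?_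
  have hx := clusterBump_nonneg (ρ := ρ) (s := K i) (x := x)
  have hy := clusterBump_nonneg (ρ := ρ) (s := K j) (x := y)
  have hxρ : clusterBump ρ (K i) x ≤ ρ / 2 := clusterBump_le hρ
  have hyρ : clusterBump ρ (K j) y ≤ ρ / 2 := clusterBump_le hρ
  have hsum : clusterBump ρ (K i) x + clusterBump ρ (K j) y ≤ min (dist x y) ρ :=
    le_min (clusterBump_add_clusterBump_le (hK i) (hK j) (hKsep hij) (hx.lt_of_ne' hi)
      (hy.lt_of_ne' hj)) (by linarith)
  change clusterBump ρ (K i) x ^ 2 + clusterBump ρ (K j) y ^ 2 ≤ _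
  nlinarith

lemma clusterMap_eq_single_of_mem [DecidableEq κ] (hρ : 0 < ρ) {i : κ} (hx : x ∈ K i) :
    clusterMap ρ K x = EuclideanSpace.single i (ρ / 2) := by
  have hxi : clusterMap ρ K x i = ρ / 2 := clusterBump_of_mem hρ.le hx
  refine PiLp.ext fun j => ?_
  rcases eq_or_ne j i with rfl | hji
  · rw [hxi, PiLp.single_eq_same]
  · rw [PiLp.single_eq_of_ne _ hji]
    by_contra hj
    exact hji (clusterMap_support_subsingleton hK hKsep x j i hj (by rw [hxi]; positivity))

lemma norm_clusterMap_sub_sq_of_mem [Fintype κ] [DecidableEq κ] (hρ : 0 < ρ) {i j : κ}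
    (hij : i ≠ j) (hx : x ∈ K i) (hy : y ∈ K j) :
    ‖clusterMap ρ K x - clusterMap ρ K y‖ ^ 2 = ρ ^ 2 / 2 := by
  rw [clusterMap_eq_single_of_mem hK hKsep hρ hx, clusterMap_eq_single_of_mem hK hKsep hρ hy,
    EuclideanSpace.norm_single_sub_single_sq, if_neg hij]
  ring

end Clusters

section TightClusters

variable {X : Type*} [MetricSpace X] {ρ : ℝ} {x y z z' w w' : X}

lemma dist_le_of_diam_closedBall_le (hz : diam (closedBall z ρ) ≤ ρ) (hx : dist z x ≤ ρ)
    (hy : dist z y ≤ ρ) : dist x y ≤ ρ :=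
  (dist_le_diam_of_mem isBounded_closedBall (mem_closedBall'.2 hx) (mem_closedBall'.2 hy)).trans hz

/-- On points whose closed `ρ`-ball has diameter at most `ρ`, being within distance `ρ` is an
equivalence relation; `tightCluster ρ z` is the class of `z`. -/
def tightCluster (ρ : ℝ) (z : X) : Set X := {w | diam (closedBall w ρ) ≤ ρ ∧ dist z w ≤ ρ}

lemma tightCluster_eq (hz : diam (closedBall z ρ) ≤ ρ) (hw : diam (closedBall w ρ) ≤ ρ)
    (hzw : dist z w ≤ ρ) : tightCluster ρ z = tightCluster ρ w := by
  ext u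
  exact and_congr_right fun _ => ⟨dist_le_of_diam_closedBall_le hz hzw,
    dist_le_of_diam_closedBall_le hw (by rwa [dist_comm])⟩

lemma self_mem_tightCluster (hρ : 0 ≤ ρ) (hz : diam (closedBall z ρ) ≤ ρ) :
    z ∈ tightCluster ρ z :=
  ⟨hz, by rwa [dist_self]⟩

lemma lt_dist_of_tightCluster_ne (hz : diam (closedBall z ρ) ≤ ρ)
    (hz' : diam (closedBall z' ρ) ≤ ρ) (hne : tightCluster ρ z ≠ tightCluster ρ z')
    (hw : w ∈ tightCluster ρ z) (hw' : w' ∈ tightCluster ρ z') : ρ < dist w w' := by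
  by_contra! h
  exact hne <| (tightCluster_eq hz hw.1 hw.2).trans <|
    (tightCluster_eq hw.1 hw'.1 h).trans (tightCluster_eq hz' hw'.1 hw'.2).symm

def tightClusters (ρ : ℝ) : Set (Set X) := tightCluster ρ '' {z | diam (closedBall z ρ) ≤ ρ}

lemma tightClusters_nonempty (hρ : 0 ≤ ρ) (i : tightClusters (X := X) ρ) :
    (i : Set X).Nonempty := by
  obtain ⟨_, ⟨z, hz, rfl⟩⟩ := i
  exact ⟨z, self_mem_tightCluster hρ hz⟩

lemma pairwise_lt_dist_tightClusters :
    Pairwise fun i j : tightClusters (X := X) ρ => ∀ w ∈ (i : Set X), ∀ w' ∈ (j : Set X),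
      ρ < dist w w' := by
  rintro ⟨_, ⟨z, hz, rfl⟩⟩ ⟨_, ⟨z', hz', rfl⟩⟩ hne
  exact fun w hw w' hw' => lt_dist_of_tightCluster_ne hz hz' (fun h => hne (Subtype.ext h)) hw hw'

lemma norm_clusterMap_tightClusters_sub_sq [Fintype X] (hρ : 0 < ρ)
    (hx : diam (closedBall x ρ) ≤ ρ) (hy : diam (closedBall y ρ) ≤ ρ) (hxy : ρ < dist x y) :
    ‖clusterMap ρ (Subtype.val : tightClusters ρ → Set X) x
      - clusterMap ρ (Subtype.val : tightClusters ρ → Set X) y‖ ^ 2 = ρ ^ 2 / 2 := by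
  refine norm_clusterMap_sub_sq_of_mem (tightClusters_nonempty hρ.le)
    pairwise_lt_dist_tightClusters hρ (i := ⟨_, Set.mem_image_of_mem _ hx⟩)
    (j := ⟨_, Set.mem_image_of_mem _ hy⟩) (fun h => ?_) (self_mem_tightCluster hρ.le hx)
    (self_mem_tightCluster hρ.le hy)
  have hyx : y ∈ tightCluster ρ x := by
    rw [Subtype.mk.inj h]
    exact self_mem_tightCluster hρ.le hy
  exact hxy.not_ge hyx.2

end TightClusters

section Partitions

variable {X : Type*} [MetricSpace X] {ρ : ℝ} {s : Set X} {x y : X}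

/-- `d(x, X ∖ s)` with the convention `d(x, ∅) = ρ`; note that `infDist x ∅ = 0`. -/
noncomputable def distCompl (ρ : ℝ) (s : Set X) (x : X) : ℝ :=
  if sᶜ = ∅ then ρ else infDist x sᶜ

lemma distCompl_nonneg (hρ : 0 ≤ ρ) : 0 ≤ distCompl ρ s x := by
  unfold distCompl
  split_ifs
  exacts [hρ, infDist_nonneg]

lemma lipschitzWith_distCompl : LipschitzWith 1 (distCompl ρ s) := by
  unfold distCompl
  split_ifs
  exacts [LipschitzWith.const' ρ, lipschitz_infDist_pt _]

lemma distCompl_le_dist (hy : y ∉ s) : distCompl ρ s x ≤ dist x y := by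
  rw [distCompl, if_neg (Set.nonempty_iff_ne_empty.1 ⟨y, hy⟩)]
  exact infDist_le_dist_of_mem hy

lemma closedBall_subset_of_lt_distCompl (h : ρ < distCompl ρ s x) : closedBall x ρ ⊆ s :=
  fun _ hw => by_contra fun hws =>
    (h.trans_le (distCompl_le_dist hws)).not_ge (mem_closedBall'.1 hw)

variable {c : X → Set X}

noncomputable def blockDepth (ρ : ℝ) (c : X → Set X) (x : X) : ℝ := min (distCompl ρ (c x) x) ρ

lemma blockDepth_nonneg (hρ : 0 ≤ ρ) : 0 ≤ blockDepth ρ c x :=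
  le_min (distCompl_nonneg hρ) hρ

lemma blockDepth_le : blockDepth ρ c x ≤ ρ := min_le_right _ _

lemma blockDepth_le_dist (hy : y ∉ c x) : blockDepth ρ c x ≤ dist x y :=
  (min_le_left _ _).trans (distCompl_le_dist hy)

lemma abs_blockDepth_sub_le (h : c x = c y) : |blockDepth ρ c x - blockDepth ρ c y| ≤ dist x y := by
  have := ((lipschitzWith_distCompl (ρ := ρ) (s := c y)).min_const ρ).dist_le_mul x y
  rw [blockDepth, blockDepth, h, ← Real.dist_eq]
  simpa using this

variable [Fintype X]

noncomputable def blockVector (ρ : ℝ) (c : X → Set X) (x : X) : EuclideanSpace ℝ (Set X) :=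
  EuclideanSpace.single (c x) (blockDepth ρ c x)

lemma norm_blockVector_sub_sq_le (hρ : 0 ≤ ρ) (hpart : ∀ x y, y ∈ c x → c y = c x) (x y : X) :
    ‖blockVector ρ c x - blockVector ρ c y‖ ^ 2 ≤ 2 * min (dist x y) ρ ^ 2 := by
  rw [blockVector, blockVector, EuclideanSpace.norm_single_sub_single_sq]
  split_ifs with h
  · nlinarith [sq_sub_le_min_sq (abs_blockDepth_sub_le h) (blockDepth_nonneg hρ)
      (blockDepth_nonneg hρ) blockDepth_le blockDepth_le, sq_nonneg (min (dist x y) ρ)]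
  · have hx : blockDepth ρ c x ≤ min (dist x y) ρ :=
      le_min (blockDepth_le_dist fun hy => h (hpart x y hy).symm) blockDepth_le
    have hy : blockDepth ρ c y ≤ min (dist x y) ρ :=
      le_min (dist_comm y x ▸ blockDepth_le_dist fun hx => h (hpart y x hx)) blockDepth_le
    nlinarith [pow_le_pow_left₀ (blockDepth_nonneg hρ) hx 2,
      pow_le_pow_left₀ (blockDepth_nonneg hρ) hy 2]

lemma blockDepth_sq_le_norm_blockVector_sub_sq (hmem : ∀ x, x ∈ c x) (hy : y ∉ c x) :
    blockDepth ρ c x ^ 2 ≤ ‖blockVector ρ c x - blockVector ρ c y‖ ^ 2 := by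
  rw [blockVector, blockVector, EuclideanSpace.norm_single_sub_single_sq,
    if_neg fun h => hy (by rw [h]; exact hmem y)]
  exact le_add_of_nonneg_right (sq_nonneg _)

variable {ι : Type*} [Fintype ι] {wt : ι → ℝ} {c : ι → X → Set X}

noncomputable def raoMap (ρ : ℝ) (wt : ι → ℝ) (c : ι → X → Set X) (x : X) :
    PiLp 2 fun _ : ι => EuclideanSpace ℝ (Set X) :=
  WithLp.toLp 2 fun i => √(wt i) • blockVector ρ (c i) x

lemma norm_raoMap_sub_sq (hw0 : ∀ i, 0 ≤ wt i) (x y : X) :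
    ‖raoMap ρ wt c x - raoMap ρ wt c y‖ ^ 2
      = ∑ i, wt i * ‖blockVector ρ (c i) x - blockVector ρ (c i) y‖ ^ 2 := by
  rw [PiLp.norm_sq_eq_of_L2]
  refine Finset.sum_congr rfl fun i _ => ?_
  simp [raoMap, ← smul_sub, norm_smul, mul_pow, Real.sq_sqrt (hw0 i)]

lemma norm_raoMap_sub_sq_le (hρ : 0 ≤ ρ) (hw0 : ∀ i, 0 ≤ wt i) (hw1 : ∑ i, wt i = 1)
    (hpart : ∀ i x y, y ∈ c i x → c i y = c i x) (x y : X) :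
    ‖raoMap ρ wt c x - raoMap ρ wt c y‖ ^ 2 ≤ 2 * min (dist x y) ρ ^ 2 :=
  calc ‖raoMap ρ wt c x - raoMap ρ wt c y‖ ^ 2
      = ∑ i, wt i * ‖blockVector ρ (c i) x - blockVector ρ (c i) y‖ ^ 2 :=
        norm_raoMap_sub_sq hw0 x y
    _ ≤ ∑ i, wt i * (2 * min (dist x y) ρ ^ 2) := Finset.sum_le_sum fun i _ =>
        mul_le_mul_of_nonneg_left (norm_blockVector_sub_sq_le hρ (hpart i) x y) (hw0 i)
    _ = 2 * min (dist x y) ρ ^ 2 := by rw [← Finset.sum_mul, hw1, one_mul]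

lemma sq_le_norm_raoMap_sub_sq (hw0 : ∀ i, 0 ≤ wt i) (hw1 : ∑ i, wt i = 1)
    (hmem : ∀ i x, x ∈ c i x) (hy : ∀ i, y ∉ c i x) {r : ℝ} (hr : 0 ≤ r)
    (h : r ≤ ∑ i, wt i * blockDepth ρ (c i) x) : r ^ 2 ≤ ‖raoMap ρ wt c x - raoMap ρ wt c y‖ ^ 2 :=
  calc r ^ 2 ≤ (∑ i, wt i * blockDepth ρ (c i) x) ^ 2 := pow_le_pow_left₀ hr h 2
    _ ≤ ∑ i, wt i * blockDepth ρ (c i) x ^ 2 := by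
        simpa using (even_two.convexOn_pow (𝕜 := ℝ)).map_sum_le (t := Finset.univ)
          (fun i _ => hw0 i) hw1 (fun i _ => Set.mem_univ (blockDepth ρ (c i) x))
    _ ≤ ∑ i, wt i * ‖blockVector ρ (c i) x - blockVector ρ (c i) y‖ ^ 2 :=
        Finset.sum_le_sum fun i _ => mul_le_mul_of_nonneg_left
          (blockDepth_sq_le_norm_blockVector_sub_sq (hmem i) (hy i)) (hw0 i)
    _ = ‖raoMap ρ wt c x - raoMap ρ wt c y‖ ^ 2 := (norm_raoMap_sub_sq hw0 x y).symm

/-- If some depth of `x` exceeds `ρ`, the closed `ρ`-ball around `x` lies inside one block. -/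
lemma le_sum_blockDepth_or_diam_closedBall_le (hdiam : ∀ i, diam (c i x) ≤ ρ)
    {r : ℝ} (h : r ≤ ∑ i, wt i * distCompl ρ (c i x) x) :
    r ≤ ∑ i, wt i * blockDepth ρ (c i) x ∨ diam (closedBall x ρ) ≤ ρ := by
  by_cases hle : ∀ i, distCompl ρ (c i x) x ≤ ρ
  · left
    simpa only [blockDepth, min_eq_left (hle _)] using h
  · right
    push Not at hle
    obtain ⟨i, hi⟩ := hle
    exact (diam_mono (closedBall_subset_of_lt_distCompl hi) (Set.toFinite _).isBounded).trans
      (hdiam i)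

end Partitions

/-- (Rao's embedding lemma, one scale.)  Let `(X, d)` be a finite
metric space, `ρ > 0`, `δ ∈ (0,1]`, and suppose there is a finitely supported probability
distribution (here: finitely many partitions `c i` with weights `wt i`) over partitions
of `X` into blocks of diameter at most `ρ` such that every point `x` satisfies
`E[d(x, X ∖ C(x))] ≥ δρ` (where `d(x, ∅) := ρ`).  A partition is encoded by the map
`c i : X → Set X` sending a point to its block.  Then there are a Hilbert space `H` and
`φ : X → H` with `‖φ x - φ y‖ ≤ 2 min (d(x,y)) ρ` for all `x, y`, and
`‖φ x - φ y‖ ≥ δρ` whenever `d(x,y) > ρ`. -/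
theorem stmt_16 (X : Type) [MetricSpace X] [Fintype X] (ρ δ : ℝ)
    (hρ : 0 < ρ) (hδ0 : 0 < δ) (hδ1 : δ ≤ 1)
    (ι : Type) [Fintype ι] (wt : ι → ℝ) (c : ι → X → Set X)
    (hw0 : ∀ i, 0 ≤ wt i) (hw1 : ∑ i, wt i = 1)
    (hmem : ∀ i x, x ∈ c i x)
    (hpart : ∀ i x y, y ∈ c i x → c i y = c i x)
    (hdiam : ∀ i x, Metric.diam (c i x) ≤ ρ)
    (hsep : ∀ x : X,
      δ * ρ ≤ ∑ i, wt i * (if (c i x)ᶜ = ∅ then ρ else Metric.infDist x (c i x)ᶜ)) :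
    ∃ (H : Type) (_ : NormedAddCommGroup H) (_ : InnerProductSpace ℝ H)
      (_ : CompleteSpace H) (φ : X → H),
      ∀ x y : X,
        ‖φ x - φ y‖ ≤ 2 * min (dist x y) ρ ∧
        (ρ < dist x y → δ * ρ ≤ ‖φ x - φ y‖) := by
  let Ψ := clusterMap ρ (Subtype.val : tightClusters (X := X) ρ → Set X)
  let φ (x : X) : WithLp 2 (EuclideanSpace ℝ (tightClusters (X := X) ρ) ×
      PiLp 2 fun _ : ι => EuclideanSpace ℝ (Set X)) :=
    WithLp.toLp 2 (√2 • Ψ x, raoMap ρ wt c x)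
  have hnorm (x y : X) :
      ‖φ x - φ y‖ ^ 2 = 2 * ‖Ψ x - Ψ y‖ ^ 2 + ‖raoMap ρ wt c x - raoMap ρ wt c y‖ ^ 2 := by
    simp [φ, WithLp.prod_norm_sq_eq_of_L2, ← smul_sub, norm_smul, mul_pow]
  refine ⟨_, inferInstance, inferInstance, inferInstance, φ, fun x y => ⟨?_, fun hxy => ?_⟩⟩
  · rw [← pow_le_pow_iff_left₀ (norm_nonneg _) (by positivity) two_ne_zero, hnorm]
    nlinarith [norm_clusterMap_sub_sq_le (tightClusters_nonempty hρ.le)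
      pairwise_lt_dist_tightClusters hρ.le x y, norm_raoMap_sub_sq_le hρ.le hw0 hw1 hpart x y]
  have hfar (x y : X) (hxy : ρ < dist x y) (i : ι) : y ∉ c i x := fun hy =>
    hxy.not_ge ((dist_le_diam_of_mem (Set.toFinite _).isBounded (hmem i x) hy).trans (hdiam i x))
  have hδρ : 0 ≤ δ * ρ := by positivity
  rw [← pow_le_pow_iff_left₀ hδρ (norm_nonneg _) two_ne_zero, hnorm]
  rcases le_sum_blockDepth_or_diam_closedBall_le (hdiam · x) (hsep x) with hx | hx
  · nlinarith [sq_le_norm_raoMap_sub_sq hw0 hw1 hmem (hfar x y hxy) hδρ hx, sq_nonneg ‖Ψ x - Ψ y‖]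
  rcases le_sum_blockDepth_or_diam_closedBall_le (hdiam · y) (hsep y) with hy | hy
  · have := sq_le_norm_raoMap_sub_sq hw0 hw1 hmem (hfar y x (dist_comm x y ▸ hxy)) hδρ hy
    rw [norm_sub_rev] at this
    nlinarith [sq_nonneg ‖Ψ x - Ψ y‖]
  nlinarith [norm_clusterMap_tightClusters_sub_sq hρ hx hy hxy,
    norm_nonneg (raoMap ρ wt c x - raoMap ρ wt c y), mul_le_of_le_one_left hρ.le hδ1]
end
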